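/- arXiv:math/0503720 — 7 statements merged into one kernel-verified Lean document; each statement's English description precedes it below -/
import Mathlib

section
/- For every λ ∈ Λ there exists ε > 0 with the following property: for every polynomial R ∈ ℂ_p[z] of degree p+1 with ‖R − P_λ‖_B < ε and every δ > 0, there exists a polynomial R' ∈ ℂ_p[z] of degree p+1 with ‖R' − R‖_B < δ which has a wandering disc, i.e. a closed ball D ⊆ ℂ_p such that D is contained in the filled Julia set K(R') = {z ∈ ℂ_p : the sequence {R'^n(z)}_{n≥0} is bounded} and the images R'^n(D), n ≥ 0, are pairwise disjoint. (In other words, P_λ lies in the interior of the closure of the set of degree p+1 polynomials possessing a wandering disc.) -/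
open Filter Metric Polynomial

/-- The polynomial `P_λ = (λ/p)·X^p + (1 − λ/p)·X^{p+1}` as an element of `K[X]`. -/
noncomputable def Ppoly {K : Type*} [NontriviallyNormedField K] (p : ℕ) (lam : K) : K[X] :=
  C (lam / (p : K)) * X ^ p + C (1 - lam / (p : K)) * X ^ (p + 1)

/-- The norm `‖f‖_B = sup_i |c_i|·r̂^i` of a polynomial `f = Σ c_i X^i` on the ball
`B = {|z| ≤ r̂}`. -/
noncomputable def polyNormB {K : Type*} [NontriviallyNormedField K] (rhat : ℝ) (f : K[X]) : ℝ :=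
  ⨆ i : ℕ, ‖f.coeff i‖ * rhat ^ i

/-- A polynomial `R'` has a wandering disc: a closed ball contained in the filled Julia
set `K(R')` whose forward images are pairwise disjoint. -/
def HasWanderingDisc {K : Type*} [NontriviallyNormedField K] (R' : Polynomial K) : Prop :=
  ∃ (c : K) (r : ℝ), 0 < r ∧
    (∀ z ∈ closedBall c r, ∃ C : ℝ, ∀ n : ℕ, ‖(fun t => R'.eval t)^[n] z‖ ≤ C) ∧
    (∀ m n : ℕ, m ≠ n →
      ((fun t => R'.eval t)^[m] '' closedBall c r) ∩
        ((fun t => R'.eval t)^[n] '' closedBall c r) = ∅)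

section Aux

variable {K : Type*} [NontriviallyNormedField K] [IsUltrametricDist K]

lemma aux_norm_add_eq_left {x y : K} (h : ‖y‖ < ‖x‖) : ‖x + y‖ = ‖x‖ := by
  refine le_antisymm ((IsUltrametricDist.norm_add_le_max x y).trans (max_le le_rfl h.le)) ?_
  by_contra hc
  push_neg at hc
  have h2 : ‖x‖ ≤ max ‖x + y‖ ‖y‖ := by
    calc ‖x‖ = ‖x + y + -y‖ := by ring_nf
    _ ≤ max ‖x + y‖ ‖-y‖ := IsUltrametricDist.norm_add_le_max _ _
    _ = max ‖x + y‖ ‖y‖ := by rw [norm_neg]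
  rcases max_cases ‖x + y‖ ‖y‖ with ⟨he, _⟩ | ⟨he, _⟩ <;> rw [he] at h2 <;> linarith

lemma aux_coeff_le_polyNormB (rhat : ℝ) (hr : 0 ≤ rhat) (f : K[X]) (i : ℕ) :
    ‖f.coeff i‖ * rhat ^ i ≤ polyNormB rhat f := by
  refine le_ciSup (f := fun j => ‖f.coeff j‖ * rhat ^ j) ?_ i
  refine ⟨∑ j ∈ Finset.range (f.natDegree + 1), ‖f.coeff j‖ * rhat ^ j, ?_⟩
  rintro x ⟨j, rfl⟩
  by_cases hj : j ≤ f.natDegree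
  · exact Finset.single_le_sum (f := fun k => ‖f.coeff k‖ * rhat ^ k)
      (fun k _ => by positivity) (Finset.mem_range.2 (Nat.lt_succ_of_le hj))
  · have hz : f.coeff j = 0 := f.coeff_eq_zero_of_natDegree_lt (lt_of_not_ge hj)
    simp only [hz, norm_zero, zero_mul]
    positivity

lemma aux_norm_multiset_prod (s : Multiset K) : ‖s.prod‖ = (s.map (fun x => ‖x‖)).prod := by
  induction s using Multiset.induction with
  | empty => simp
  | cons a s ih => simp [norm_mul, ih]

end Aux

lemma aux_pow_card_le_prod (s : Multiset ℝ) (t : ℝ) (ht : 0 ≤ t) (h : ∀ x ∈ s, t ≤ x) :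
    t ^ Multiset.card s ≤ s.prod := by
  induction s using Multiset.induction with
  | empty => simp
  | cons a s ih =>
    have h1 : t ^ Multiset.card s ≤ s.prod := ih (fun x hx => h x (Multiset.mem_cons_of_mem hx))
    have h2 : t ≤ a := h a (Multiset.mem_cons_self a s)
    have h3 : (0:ℝ) ≤ t ^ Multiset.card s := pow_nonneg ht _
    simp only [Multiset.card_cons, Multiset.prod_cons, pow_succ]
    calc t ^ Multiset.card s * t ≤ s.prod * a :=
          mul_le_mul h1 h2 ht (le_trans h3 h1)
    _ = a * s.prod := mul_comm _ _

/-- Every `P_λ`, `λ ∈ Λ`, lies in the interior of the closure of the set of degree `p+1`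
polynomials possessing a wandering disc: every polynomial of degree `p+1` close enough to
`P_λ` in `‖·‖_B` can be approximated arbitrarily well by degree `p+1` polynomials with a
wandering disc.  Here `K` plays the role of `ℂ_p`. -/
theorem statement3 (p : ℕ) (hp : p.Prime)
    {K : Type*} [NontriviallyNormedField K] [IsAlgClosed K] [CompleteSpace K]
    [IsUltrametricDist K] [CharZero K]
    (hpnorm : ‖(p : K)‖ = (p : ℝ)⁻¹)
    (rhat : ℝ) (hrhat : 1 < rhat) (hrhatval : ∃ x : K, x ≠ 0 ∧ ‖x‖ = rhat)
    (lam : K) (hlam : ‖lam - 1‖ < 1) :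
    ∃ ε : ℝ, 0 < ε ∧
      ∀ R : Polynomial K, R.natDegree = p + 1 → polyNormB rhat (R - Ppoly p lam) < ε →
        ∀ δ : ℝ, 0 < δ →
          ∃ R' : Polynomial K, R'.natDegree = p + 1 ∧ polyNormB rhat (R' - R) < δ ∧
            HasWanderingDisc R' := by
  classical
  have hp2 : 2 ≤ p := hp.two_le
  have hpR : (1:ℝ) < (p:ℝ) := by exact_mod_cast hp.one_lt
  have hpR0 : (0:ℝ) < (p:ℝ) := by linarith
  set u : ℝ := (p:ℝ)⁻¹ with hu_def
  have hu0 : 0 < u := by positivity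
  have hu1 : u < 1 := by
    rw [hu_def, inv_lt_one_iff₀]; right; exact hpR
  set t : ℝ := u ^ 2 with ht_def
  have ht0 : 0 < t := by positivity
  have ht1 : t < 1 := by
    calc t = u * u := sq u
    _ < 1 * 1 := by apply mul_lt_mul' hu1.le hu1 hu0.le one_pos
    _ = 1 := one_mul 1
  set ε : ℝ := t ^ (p + 1) with hε_def
  have hε0 : 0 < ε := by positivity
  have hε1 : ε < 1 := by
    calc ε ≤ t := by
          simpa using pow_le_pow_of_le_one ht0.le ht1.le (by omega : 1 ≤ p + 1)
    _ < 1 := ht1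
  have hεu : ε ≤ u := by
    have h1 : ε = u ^ (2 * (p+1)) := by rw [hε_def, ht_def, ← pow_mul]
    rw [h1]
    simpa using pow_le_pow_of_le_one hu0.le hu1.le (by omega : 1 ≤ 2 * (p+1))
  refine ⟨ε, hε0, ?_⟩
  intro R hdeg hclose δ hδ
  refine ⟨R, hdeg, ?_, ?_⟩
  · have h0 : polyNormB rhat (R - R) = 0 := by
      simp [polyNormB, sub_self, ciSup_const]
    rw [h0]; exact hδ
  -- coefficient bounds
  have hcoeff : ∀ i : ℕ, ‖(R - Ppoly p lam).coeff i‖ < ε := by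
    intro i
    have h1 := aux_coeff_le_polyNormB rhat (by linarith) (R - Ppoly p lam) i
    have h2 : (1:ℝ) ≤ rhat ^ i := one_le_pow₀ hrhat.le
    nlinarith [norm_nonneg ((R - Ppoly p lam).coeff i)]
  have hlam1 : ‖lam‖ = 1 := by
    have h1 : ‖(1:K) + (lam - 1)‖ = ‖(1:K)‖ := aux_norm_add_eq_left (by rw [norm_one]; exact hlam)
    rw [add_sub_cancel] at h1
    rw [h1, norm_one]
  have hpKne : (p:K) ≠ 0 := Nat.cast_ne_zero.2 hp.ne_zero
  have hdivnorm : ‖lam / (p:K)‖ = (p:ℝ) := by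
    rw [norm_div, hlam1, hpnorm, one_div, inv_inv]
  have hLnorm : ‖1 - lam / (p:K)‖ = (p:ℝ) := by
    have h1 : ‖-(lam / (p:K)) + 1‖ = ‖-(lam / (p:K))‖ :=
      aux_norm_add_eq_left (by rw [norm_neg, hdivnorm, norm_one]; exact hpR)
    rw [neg_add_eq_sub] at h1
    rw [h1, norm_neg, hdivnorm]
  -- coefficients of Ppoly
  have hPc0 : ∀ i : ℕ, i ≠ p → i ≠ p + 1 → (Ppoly p lam).coeff i = 0 := by
    intro i h1 h2
    simp [Ppoly, coeff_add, coeff_C_mul, coeff_X_pow, sub_mul, coeff_sub, one_mul,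
      h1, h2, Ne.symm h1, Ne.symm h2]
  have hPcp : (Ppoly p lam).coeff p = lam / (p:K) := by
    simp [Ppoly, coeff_add, coeff_C_mul, coeff_X_pow, sub_mul, coeff_sub, one_mul,
      (by omega : ¬(p + 1 = p))]
  have hPcp1 : (Ppoly p lam).coeff (p+1) = 1 - lam / (p:K) := by
    simp [Ppoly, coeff_add, coeff_C_mul, coeff_X_pow, sub_mul, coeff_sub, one_mul,
      (by omega : ¬(p = p + 1))]
  -- coefficients of R
  have hsmall : ∀ i : ℕ, i ≠ p → i ≠ p + 1 → ‖R.coeff i‖ < ε := by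
    intro i h1 h2
    have := hcoeff i
    rwa [coeff_sub, hPc0 i h1 h2, sub_zero] at this
  have hcp : ‖R.coeff p‖ ≤ (p:ℝ) := by
    have h1 := hcoeff p
    rw [coeff_sub, hPcp] at h1
    have h2 : R.coeff p = (R.coeff p - lam / (p:K)) + lam / (p:K) := by ring
    calc ‖R.coeff p‖ = ‖(R.coeff p - lam / (p:K)) + lam / (p:K)‖ := by rw [← h2]
    _ ≤ max ‖R.coeff p - lam / (p:K)‖ ‖lam / (p:K)‖ := IsUltrametricDist.norm_add_le_max _ _
    _ ≤ (p:ℝ) := max_le (by rw [hdivnorm] at *; linarith) (le_of_eq hdivnorm)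
  have hctop : ‖R.coeff (p+1)‖ = (p:ℝ) := by
    have h1 := hcoeff (p+1)
    rw [coeff_sub, hPcp1] at h1
    have h2 : R.coeff (p+1) = (1 - lam / (p:K)) + (R.coeff (p+1) - (1 - lam / (p:K))) := by ring
    rw [h2, aux_norm_add_eq_left (by rw [hLnorm]; linarith), hLnorm]
  have hLne : R.coeff (p+1) ≠ 0 := by
    intro h
    rw [h, norm_zero] at hctop
    linarith
  -- the fixed point
  set S : K[X] := R - X with hS_def
  have hSdeg : S.natDegree = p + 1 := by
    rw [hS_def]
    rw [natDegree_sub_eq_left_of_natDegree_lt (by rw [hdeg, natDegree_X]; omega), hdeg]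
  have hS0 : S ≠ 0 := fun h => by simp [h] at hSdeg
  have hSlead : S.leadingCoeff = R.coeff (p+1) := by
    rw [leadingCoeff, hSdeg, hS_def, coeff_sub, coeff_X, if_neg (by omega : ¬(1 = p + 1)), sub_zero]
  set S' : K[X] := S * C (S.leadingCoeff)⁻¹ with hS'_def
  have hS'monic : S'.Monic := monic_mul_leadingCoeff_inv hS0
  have hS'deg : S'.natDegree = p + 1 := by
    rw [hS'_def, natDegree_mul_leadingCoeff_inv S hS0, hSdeg]
  have hsplit : S'.Splits := IsAlgClosed.splits S'
  have hprodnorm : ‖S'.roots.prod‖ < ε := by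
    have h1 : S'.coeff 0 = (-1) ^ S'.natDegree * S'.roots.prod :=
      hsplit.coeff_zero_eq_prod_roots_of_monic hS'monic
    have h2 : ‖S'.coeff 0‖ = ‖S'.roots.prod‖ := by
      rw [h1, norm_mul, norm_pow, norm_neg, norm_one, one_pow, one_mul]
    rw [← h2, hS'_def, coeff_mul_C, norm_mul, hSlead]
    have h3 : ‖S.coeff 0‖ < ε := by
      rw [hS_def, coeff_sub, coeff_X_zero, sub_zero]
      exact hsmall 0 (by omega) (by omega)
    have h4 : ‖(R.coeff (p+1))⁻¹‖ = (p:ℝ)⁻¹ := by rw [norm_inv, hctop]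
    rw [h4]
    calc ‖S.coeff 0‖ * (p:ℝ)⁻¹ ≤ ‖S.coeff 0‖ * 1 := by
          apply mul_le_mul_of_nonneg_left _ (norm_nonneg _)
          rw [← hu_def]; exact hu1.le
    _ < ε := by rw [mul_one]; exact h3
  have hroot : ∃ α ∈ S'.roots, ‖α‖ ≤ t := by
    by_contra hcon
    push_neg at hcon
    have h1 : t ^ Multiset.card S'.roots ≤ (S'.roots.map (fun x => ‖x‖)).prod := by
      have := aux_pow_card_le_prod (S'.roots.map (fun x => ‖x‖)) t ht0.le
        (fun x hx => by
          obtain ⟨y, hy, rfl⟩ := Multiset.mem_map.1 hx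
          exact (hcon y hy).le)
      simpa using this
    have h2 : (S'.roots.map (fun x => ‖x‖)).prod = ‖S'.roots.prod‖ :=
      (aux_norm_multiset_prod S'.roots).symm
    have h3 : Multiset.card S'.roots ≤ p + 1 := hS'deg ▸ S'.card_roots'
    have h4 : ε ≤ t ^ Multiset.card S'.roots := by
      rw [hε_def]
      exact pow_le_pow_of_le_one ht0.le ht1.le h3
    rw [h2] at h1
    linarith
  obtain ⟨α, hαmem, hαt⟩ := hroot
  have hαfix : R.eval α = α := by
    have h1 : S'.eval α = 0 := by
      have := (mem_roots (hS'monic.ne_zero)).1 hαmem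
      exact this
    rw [hS'_def, eval_mul, eval_C, hS_def, eval_sub, eval_X, mul_eq_zero] at h1
    rcases h1 with h1 | h1
    · exact sub_eq_zero.1 h1
    · exact absurd h1 (inv_ne_zero (hSlead ▸ hLne))
  -- Taylor expansion at the fixed point
  set g : K[X] := taylor α R with hg_def
  have hg0 : g.coeff 0 = α := by rw [hg_def, taylor_coeff_zero, hαfix]
  have hgdeg : g.natDegree = p + 1 := by rw [hg_def, natDegree_taylor, hdeg]
  have hgeval : ∀ w : K, g.eval (w - α) = R.eval w := fun w => by
    rw [hg_def, taylor_eval, sub_add_cancel]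
  have hgne : g.coeff (p+1) ≠ 0 := by
    have hgn0 : g ≠ 0 := by intro h; rw [h] at hgdeg; simp at hgdeg
    have h2 := mt leadingCoeff_eq_zero.1 hgn0
    rwa [leadingCoeff, hgdeg] at h2
  have hex : ∃ k, 0 < k ∧ g.coeff k ≠ 0 := ⟨p+1, Nat.succ_pos p, hgne⟩
  set k0 := Nat.find hex with hk0_def
  obtain ⟨hk0pos, hk0ne⟩ := Nat.find_spec hex
  have hk0le : k0 ≤ p + 1 := Nat.find_min' hex ⟨Nat.succ_pos p, hgne⟩
  have hk0min : ∀ k, 0 < k → k < k0 → g.coeff k = 0 := by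
    intro k hk hlt
    by_contra h
    exact Nat.find_min hex hlt ⟨hk, h⟩
  set a : ℝ := ‖g.coeff k0‖ with ha_def
  have ha0 : 0 < a := norm_pos_iff.2 hk0ne
  set A : ℝ := 1 + ∑ k ∈ Finset.range (p+2), ‖g.coeff k‖ with hA_def
  have hsum0 : 0 ≤ ∑ k ∈ Finset.range (p+2), ‖g.coeff k‖ :=
    Finset.sum_nonneg fun _ _ => norm_nonneg _
  have hA1 : 1 ≤ A := by rw [hA_def]; linarith
  have hA0 : 0 < A := by linarith
  have hAcoeff : ∀ k : ℕ, ‖g.coeff k‖ ≤ A := by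
    intro k
    by_cases hk : k ≤ p + 1
    · have h1 : ‖g.coeff k‖ ≤ ∑ j ∈ Finset.range (p+2), ‖g.coeff j‖ :=
        Finset.single_le_sum (f := fun j => ‖g.coeff j‖) (fun j _ => norm_nonneg _)
          (Finset.mem_range.2 (by omega))
      rw [hA_def]; linarith
    · rw [g.coeff_eq_zero_of_natDegree_lt (by omega : g.natDegree < k)]
      simp only [norm_zero]; linarith
  have hAa : a ≤ A := hAcoeff k0
  -- bound on the multiplier (coefficient 1 of the Taylor expansion)
  have hαu : ‖α‖ ≤ 1 := hαt.trans ht1.le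
  have hpu : (p:ℝ) * u = 1 := mul_inv_cancel₀ (ne_of_gt hpR0)
  have hpow : ∀ m : ℕ, (p:ℝ) * u ^ (m+1) = u ^ m := by
    intro m
    rw [pow_succ', ← mul_assoc, hpu, one_mul]
  have hb1 : ‖g.coeff 1‖ ≤ u := by
    rw [hg_def, taylor_coeff_one]
    have hdd : (derivative R).natDegree < p + 1 := by
      have h1 := natDegree_derivative_le R
      rw [hdeg] at h1
      omega
    rw [eval_eq_sum_range' hdd]
    apply IsUltrametricDist.norm_sum_le_of_forall_le_of_nonneg hu0.le
    intro i hi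
    rw [Finset.mem_range] at hi
    rw [coeff_derivative, norm_mul, norm_mul, norm_pow]
    have hni : ‖((i:K) + 1)‖ ≤ 1 := by
      have h2 := IsUltrametricDist.norm_natCast_le_one K (i+1)
      push_cast at h2
      exact h2
    have hα2 : ‖α‖ ^ i ≤ u ^ (2*i) := by
      calc ‖α‖ ^ i ≤ t ^ i := pow_le_pow_left₀ (norm_nonneg α) hαt i
      _ = u ^ (2*i) := by rw [ht_def, ← pow_mul]
    by_cases hB : i + 1 = p
    · have hi1 : 1 ≤ i := by omega
      calc ‖R.coeff (i+1)‖ * ‖((i:K) + 1)‖ * ‖α‖ ^ i ≤ (p:ℝ) * 1 * u ^ (2*i) :=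
            mul_le_mul (mul_le_mul (hB ▸ hcp) hni (norm_nonneg _) hpR0.le) hα2
              (pow_nonneg (norm_nonneg _) i) (by positivity)
      _ = u ^ (2*i - 1) := by
            rw [mul_one, (by omega : 2*i = (2*i - 1) + 1), hpow]
            congr 1
      _ ≤ u := by
            have := pow_le_pow_of_le_one hu0.le hu1.le (by omega : 1 ≤ 2*i - 1)
            simpa using this
    · by_cases hC : i + 1 = p + 1
      · have hi1 : 1 ≤ i := by omega
        calc ‖R.coeff (i+1)‖ * ‖((i:K) + 1)‖ * ‖α‖ ^ i ≤ (p:ℝ) * 1 * u ^ (2*i) :=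
              mul_le_mul (mul_le_mul (le_of_eq (hC ▸ hctop)) hni (norm_nonneg _) hpR0.le) hα2
                (pow_nonneg (norm_nonneg _) i) (by positivity)
        _ = u ^ (2*i - 1) := by
              rw [mul_one, (by omega : 2*i = (2*i - 1) + 1), hpow]
              congr 1
        _ ≤ u := by
              have := pow_le_pow_of_le_one hu0.le hu1.le (by omega : 1 ≤ 2*i - 1)
              simpa using this
      · have hsm := (hsmall (i+1) hB hC).le
        have hα3 : ‖α‖ ^ i ≤ 1 := pow_le_one₀ (norm_nonneg α) hαu
        calc ‖R.coeff (i+1)‖ * ‖((i:K) + 1)‖ * ‖α‖ ^ i ≤ ε * 1 * 1 :=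
              mul_le_mul (mul_le_mul hsm hni (norm_nonneg _) hε0.le) hα3
                (pow_nonneg (norm_nonneg _) i) (by positivity)
        _ = ε := by ring
        _ ≤ u := hεu
  -- choice of the radius
  obtain ⟨m, hm⟩ := exists_pow_lt_of_lt_one (x := min a 1 / A) (by positivity) hu1
  set d0 : ℝ := u ^ m with hd0_def
  have hd0pos : 0 < d0 := by positivity
  have hd0le1 : d0 ≤ 1 := pow_le_one₀ hu0.le hu1.le
  have hAd0 : A * d0 < min a 1 := by
    rw [hd0_def]
    calc A * u ^ m < A * (min a 1 / A) := mul_lt_mul_of_pos_left hm hA0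
    _ = min a 1 := by field_simp
  have hAd0a : A * d0 < a := lt_of_lt_of_le hAd0 (min_le_left _ _)
  have hAd0one : A * d0 < 1 := lt_of_lt_of_le hAd0 (min_le_right _ _)
  have hC1 : a * d0 ^ (k0 - 1) < 1 := by
    rcases Nat.lt_or_ge k0 2 with hk | hk
    · have hk1 : k0 = 1 := by omega
      have ha1 : a ≤ u := by rw [ha_def, hk1]; exact hb1
      rw [hk1]
      simp only [Nat.sub_self, pow_zero, mul_one]
      exact lt_of_le_of_lt ha1 hu1
    · calc a * d0 ^ (k0 - 1) ≤ A * d0 := by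
            have h1 : d0 ^ (k0-1) ≤ d0 := by
              simpa using pow_le_pow_of_le_one hd0pos.le hd0le1 (by omega : 1 ≤ k0 - 1)
            exact mul_le_mul hAa h1 (by positivity) hA0.le
      _ < 1 := hAd0one
  -- the radius strictly decreases under iteration
  have hdec : ∀ d : ℝ, 0 < d → d ≤ d0 → a * d ^ k0 < d := by
    intro d hd hdle
    have h1 : d ^ k0 = d ^ (k0 - 1) * d := by
      rw [← pow_succ]
      congr 1
      omega
    have h2 : d ^ (k0 - 1) ≤ d0 ^ (k0 - 1) := pow_le_pow_left₀ hd.le hdle _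
    calc a * d ^ k0 = (a * d ^ (k0-1)) * d := by rw [h1]; ring
    _ ≤ (a * d0 ^ (k0-1)) * d := by
          apply mul_le_mul_of_nonneg_right _ hd.le
          exact mul_le_mul_of_nonneg_left h2 ha0.le
    _ < 1 * d := mul_lt_mul_of_pos_right hC1 hd
    _ = d := one_mul d
  -- the one-step norm identity
  have hstep : ∀ (w : K) (d : ℝ), 0 < d → d ≤ d0 → ‖w - α‖ = d →
      ‖R.eval w - α‖ = a * d ^ k0 := by
    intro w d hd hdle hwd
    have hsum : R.eval w - α = ∑ k ∈ Finset.range (p+1), g.coeff (k+1) * (w - α)^(k+1) := by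
      have h1 : g.eval (w - α) = ∑ k ∈ Finset.range (p+2), g.coeff k * (w - α)^k :=
        eval_eq_sum_range' (by rw [hgdeg]; omega) (w - α)
      rw [← hgeval w, h1, Finset.sum_range_succ']
      simp [hg0]
    rw [hsum]
    have hmem : k0 - 1 ∈ Finset.range (p+1) := Finset.mem_range.2 (by omega)
    rw [← Finset.add_sum_erase _ _ hmem]
    have hk0s : k0 - 1 + 1 = k0 := by omega
    rw [hk0s]
    have hmain : ‖g.coeff k0 * (w - α) ^ k0‖ = a * d ^ k0 := by
      rw [norm_mul, norm_pow, hwd, ha_def]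
    have herr : ‖∑ k ∈ (Finset.range (p+1)).erase (k0-1), g.coeff (k+1) * (w - α)^(k+1)‖
        ≤ A * d0 * d ^ k0 := by
      apply IsUltrametricDist.norm_sum_le_of_forall_le_of_nonneg (by positivity)
      intro k hk
      obtain ⟨hkne, hkmem⟩ := Finset.mem_erase.1 hk
      rw [norm_mul, norm_pow, hwd]
      rcases Nat.lt_or_ge (k+1) k0 with hlt | hge
      · rw [hk0min (k+1) (by omega) hlt]
        simp only [norm_zero, zero_mul]
        positivity
      · have hgt : k0 < k + 1 := by omega
        have h2 : d ^ (k+1) = d ^ (k+1-k0) * d ^ k0 := by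
          rw [← pow_add]
          congr 1
          omega
        have h3 : d ^ (k+1-k0) ≤ d0 := by
          calc d ^ (k+1-k0) ≤ d ^ 1 :=
                pow_le_pow_of_le_one hd.le (hdle.trans hd0le1) (by omega)
          _ = d := pow_one d
          _ ≤ d0 := hdle
        rw [h2]
        calc ‖g.coeff (k+1)‖ * (d ^ (k+1-k0) * d ^ k0) ≤ A * (d0 * d ^ k0) := by
              apply mul_le_mul (hAcoeff _) _ (by positivity) hA0.le
              exact mul_le_mul_of_nonneg_right h3 (by positivity)
        _ = A * d0 * d ^ k0 := by ring
    have hlt2 : A * d0 * d ^ k0 < a * d ^ k0 := mul_lt_mul_of_pos_right hAd0a (by positivity)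
    have hyx : ‖∑ k ∈ (Finset.range (p+1)).erase (k0-1), g.coeff (k+1) * (w - α)^(k+1)‖
        < ‖g.coeff k0 * (w - α) ^ k0‖ := by
      rw [hmain]
      exact lt_of_le_of_lt herr hlt2
    rw [aux_norm_add_eq_left hyx]
    exact hmain
  -- the sequence of radii
  set D : ℕ → ℝ := fun n => (fun s => a * s ^ k0)^[n] d0 with hD_def
  have hD0 : D 0 = d0 := rfl
  have hDsucc : ∀ n, D (n+1) = a * (D n) ^ k0 := by
    intro n
    show (fun s => a * s ^ k0)^[n+1] d0 = _
    rw [Function.iterate_succ_apply']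
  have hDok : ∀ n, 0 < D n ∧ D n ≤ d0 := by
    intro n
    induction n with
    | zero => exact ⟨hd0pos, le_rfl⟩
    | succ n ih =>
      rw [hDsucc n]
      exact ⟨mul_pos ha0 (pow_pos ih.1 _), ((hdec (D n) ih.1 ih.2).le).trans ih.2⟩
  have hDlt : ∀ n, D (n+1) < D n := fun n => by
    rw [hDsucc n]; exact hdec (D n) (hDok n).1 (hDok n).2
  have hDanti : StrictAnti D := strictAnti_nat_of_succ_lt hDlt
  -- the wandering disc
  set z0 : K := α + (p:K) ^ m with hz0_def
  have hz0α : ‖z0 - α‖ = d0 := by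
    rw [hz0_def, add_sub_cancel_left, norm_pow, hpnorm]
  have hball : ∀ w ∈ closedBall z0 (d0/2), ‖w - α‖ = d0 := by
    intro w hw
    rw [mem_closedBall, dist_eq_norm] at hw
    have h1 : w - α = (z0 - α) + (w - z0) := by ring
    rw [h1, aux_norm_add_eq_left (by rw [hz0α]; linarith), hz0α]
  have horbit : ∀ n, ∀ w ∈ closedBall z0 (d0/2),
      ‖(fun t => R.eval t)^[n] w - α‖ = D n := by
    intro n
    induction n with
    | zero => intro w hw; simpa [hD0] using hball w hw
    | succ n ih =>
      intro w hw
      rw [Function.iterate_succ_apply', hDsucc n]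
      exact hstep ((fun t => R.eval t)^[n] w) (D n) (hDok n).1 (hDok n).2 (ih w hw)
  refine ⟨z0, d0/2, by positivity, ?_, ?_⟩
  · intro z hz
    refine ⟨‖α‖ + d0, fun n => ?_⟩
    calc ‖(fun t => R.eval t)^[n] z‖ = ‖α + ((fun t => R.eval t)^[n] z - α)‖ := by
          congr 1
          ring
    _ ≤ ‖α‖ + ‖(fun t => R.eval t)^[n] z - α‖ := norm_add_le _ _
    _ = ‖α‖ + D n := by rw [horbit n z hz]
    _ ≤ ‖α‖ + d0 := by linarith [(hDok n).2]
  · intro m1 n1 hne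
    rw [Set.eq_empty_iff_forall_notMem]
    rintro x ⟨⟨w1, hw1, hx1⟩, ⟨w2, hw2, hx2⟩⟩
    have h1 : ‖x - α‖ = D m1 := by rw [← hx1]; exact horbit m1 w1 hw1
    have h2 : ‖x - α‖ = D n1 := by rw [← hx2]; exact horbit n1 w2 hw2
    exact hne (hDanti.injective (h1.symm.trans h2))
end

section
/- Let {m_i}_{i≥0} and {M_i}_{i≥0} be sequences of positive integers such that ρ_{m_i−1}·ρ_{m_i−2}·…·ρ_1·p^{M_i} ≤ 1 for all i ≥ 0. Suppose that for some λ₀ ∈ Λ there exists x ∈ K(P_{λ₀}) whose itinerary under P_{λ₀} is 0…0 (m₀ times) 1…1 (M₀ times) 0…0 (m₁ times) 1…1 (M₁ times) … 0…0 (m_i times) 1…1 (M_i times) …, i.e. P_{λ₀}^n(x) ∈ B_{θ_n} where θ is this 0-1 sequence. Then the closed ball U = {z : |z − x| ≤ S} is contained in K(P_{λ₀}). -/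
open Filter Metric

/-- The polynomial family `P_λ(z) = (λ/p)·z^p + (1 − λ/p)·z^{p+1}`. -/
noncomputable def Pfam {K : Type*} [NontriviallyNormedField K] (p : ℕ) (lam z : K) : K :=
  lam / (p : K) * z ^ p + (1 - lam / (p : K)) * z ^ (p + 1)

section AuxLemmas

open IsUltrametricDist

lemma aux_split (t : ℝ) (k : ℕ) (hk : 1 ≤ k) : t ^ k = t ^ (k - 1) * t := by
  conv_lhs => rw [show k = (k - 1) + 1 by omega]
  rw [pow_succ]

lemma aux_r0key (p : ℕ) (hp2 : 2 ≤ p) :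
    (p : ℝ) * ((p : ℝ) ^ (-(1:ℝ) / ((p : ℝ) - 1))) ^ (p - 1) = 1 := by
  have hppos : (0:ℝ) < p := by positivity
  have hq : ((p:ℝ) - 1) ≠ 0 := by
    have : (2:ℝ) ≤ p := by exact_mod_cast hp2
    linarith
  have h1 : (((p:ℝ) ^ (-(1:ℝ) / ((p : ℝ) - 1))) ^ (p - 1) : ℝ)
      = (p:ℝ) ^ ((-(1:ℝ) / ((p : ℝ) - 1)) * ((p - 1 : ℕ) : ℝ)) := by
    rw [Real.rpow_mul hppos.le, Real.rpow_natCast]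
  have h2 : ((p - 1 : ℕ) : ℝ) = (p:ℝ) - 1 := by
    have : (1:ℕ) ≤ p := by omega
    push_cast [Nat.cast_sub this]
    ring
  rw [h1, h2, div_mul_cancel₀, Real.rpow_neg_one, mul_inv_cancel₀ hppos.ne']
  exact hq

lemma aux_main (S : ℝ) (hS : 0 < S)
    (ρseq : ℕ → ℝ) (hρ0 : ρseq 0 = 1) (hρpos : ∀ n, 0 < ρseq n) (hρle1 : ∀ n, ρseq n ≤ 1)
    (P : ℝ) (hP : 1 ≤ P)
    (m M N : ℕ → ℕ) (hm : ∀ i, 1 ≤ m i) (hM : ∀ i, 1 ≤ M i)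
    (hN0 : N 0 = 0) (hNrec : ∀ i, N (i + 1) = N i + m i + M i)
    (hprod : ∀ i, (∏ j ∈ Finset.Ico 1 (m i), ρseq j) * P ^ (M i) ≤ 1)
    (d : ℕ → ℝ) (hd0 : d 0 ≤ S)
    (hstepA : ∀ i, ∀ j < m i, d (N i + j) ≤ S →
      d (N i + j + 1) ≤ ρseq (m i - j - 1) * d (N i + j))
    (hstepB : ∀ i, ∀ j < M i, d (N i + m i + j) ≤ S →
      d (N i + m i + j + 1) ≤ P * d (N i + m i + j)) :
    ∀ n, d n ≤ S := by
  have hP0 : ∀ i (a : ℕ), (∏ k ∈ Finset.Ico a (m i), ρseq k) ≤ 1 := fun i a =>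
    Finset.prod_le_one (fun k _ => (hρpos k).le) (fun k _ => hρle1 k)
  have hP0n : ∀ i (a : ℕ), 0 ≤ (∏ k ∈ Finset.Ico a (m i), ρseq k) := fun i a =>
    Finset.prod_nonneg fun k _ => (hρpos k).le
  have hPpow : ∀ i, ∀ j ≤ M i, (∏ k ∈ Finset.Ico 1 (m i), ρseq k) * P ^ j ≤ 1 := by
    intro i j hj
    calc (∏ k ∈ Finset.Ico 1 (m i), ρseq k) * P ^ j
        ≤ (∏ k ∈ Finset.Ico 1 (m i), ρseq k) * P ^ (M i) := by
          apply mul_le_mul_of_nonneg_left _ (hP0n i 1)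
          exact pow_le_pow_right₀ hP hj
      _ ≤ 1 := hprod i
  have hG : ∀ i, d (N i) ≤ S →
      (∀ j ≤ m i, d (N i + j) ≤ S * ∏ k ∈ Finset.Ico (m i - j) (m i), ρseq k) ∧
      (∀ j ≤ M i, d (N i + m i + j) ≤ S * ((∏ k ∈ Finset.Ico 1 (m i), ρseq k) * P ^ j)) := by
    intro i hdNi
    have part0 : ∀ j ≤ m i, d (N i + j) ≤ S * ∏ k ∈ Finset.Ico (m i - j) (m i), ρseq k := by
      intro j
      induction j with
      | zero =>
        intro _
        simpa [Finset.Ico_self] using hdNi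
      | succ j ih =>
        intro hj
        have ihj := ih (by omega)
        have hdS : d (N i + j) ≤ S := by
          calc d (N i + j) ≤ S * ∏ k ∈ Finset.Ico (m i - j) (m i), ρseq k := ihj
            _ ≤ S * 1 := mul_le_mul_of_nonneg_left (hP0 i _) hS.le
            _ = S := mul_one S
        calc d (N i + (j + 1)) ≤ ρseq (m i - j - 1) * d (N i + j) :=
              hstepA i j (by omega) hdS
          _ ≤ ρseq (m i - j - 1) * (S * ∏ k ∈ Finset.Ico (m i - j) (m i), ρseq k) :=
              mul_le_mul_of_nonneg_left ihj (hρpos _).le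
          _ = S * ∏ k ∈ Finset.Ico (m i - (j + 1)) (m i), ρseq k := by
              rw [Finset.prod_eq_prod_Ico_succ_bot (show m i - (j+1) < m i by omega),
                show m i - (j + 1) + 1 = m i - j by omega,
                show m i - (j + 1) = m i - j - 1 by omega]
              ring
    refine ⟨part0, ?_⟩
    intro j
    induction j with
    | zero =>
      intro _
      have h1 := part0 (m i) le_rfl
      rw [Nat.sub_self] at h1
      rw [Finset.prod_eq_prod_Ico_succ_bot (show 0 < m i from hm i)] at h1
      simpa [hρ0] using h1
    | succ j ih =>
      intro hj
      have ihj := ih (by omega)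
      have hdS : d (N i + m i + j) ≤ S := by
        calc d (N i + m i + j)
            ≤ S * ((∏ k ∈ Finset.Ico 1 (m i), ρseq k) * P ^ j) := ihj
          _ ≤ S * 1 := mul_le_mul_of_nonneg_left (hPpow i j (by omega)) hS.le
          _ = S := mul_one S
      calc d (N i + m i + (j + 1)) ≤ P * d (N i + m i + j) := hstepB i j (by omega) hdS
        _ ≤ P * (S * ((∏ k ∈ Finset.Ico 1 (m i), ρseq k) * P ^ j)) :=
            mul_le_mul_of_nonneg_left ihj (by linarith)
        _ = S * ((∏ k ∈ Finset.Ico 1 (m i), ρseq k) * P ^ (j + 1)) := by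
            rw [pow_succ]; ring
  have hNS : ∀ i, d (N i) ≤ S := by
    intro i
    induction i with
    | zero => rw [hN0]; exact hd0
    | succ i ih =>
      have h1 := (hG i ih).2 (M i) le_rfl
      rw [hNrec i]
      calc d (N i + m i + M i)
          ≤ S * ((∏ k ∈ Finset.Ico 1 (m i), ρseq k) * P ^ (M i)) := h1
        _ ≤ S * 1 := mul_le_mul_of_nonneg_left (hPpow i (M i) le_rfl) hS.le
        _ = S := mul_one S
  have hdecomp : ∀ n, ∃ i j, n = N i + j ∧ j < m i + M i := by
    intro n
    induction n with
    | zero => exact ⟨0, 0, by rw [hN0], by have := hm 0; have := hM 0; omega⟩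
    | succ n ih =>
      obtain ⟨i, j, hn, hj⟩ := ih
      by_cases hcase : j + 1 < m i + M i
      · exact ⟨i, j + 1, by omega, hcase⟩
      · exact ⟨i + 1, 0, by rw [hNrec i]; omega, by have := hm (i+1); have := hM (i+1); omega⟩
  intro n
  obtain ⟨i, j, rfl, hj⟩ := hdecomp n
  by_cases hcase : j < m i
  · calc d (N i + j) ≤ S * ∏ k ∈ Finset.Ico (m i - j) (m i), ρseq k :=
        (hG i (hNS i)).1 j hcase.le
      _ ≤ S * 1 := mul_le_mul_of_nonneg_left (hP0 i _) hS.le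
      _ = S := mul_one S
  · have h1 := (hG i (hNS i)).2 (j - m i) (by omega)
    rw [show N i + m i + (j - m i) = N i + j by omega] at h1
    calc d (N i + j) ≤ S * ((∏ k ∈ Finset.Ico 1 (m i), ρseq k) * P ^ (j - m i)) := h1
      _ ≤ S * 1 := mul_le_mul_of_nonneg_left (hPpow i _ (by omega)) hS.le
      _ = S := mul_one S

variable {K : Type*} [NontriviallyNormedField K] [IsUltrametricDist K]

lemma aux_norm_eq_one {w : K} (hw : ‖w - 1‖ < 1) : ‖w‖ = 1 := by
  have h : w = (w - 1) + 1 := by ring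
  rw [h, norm_add_eq_max_of_norm_ne_norm (by rw [norm_one]; exact hw.ne), norm_one,
    max_eq_right hw.le]

lemma aux_binom (c h : K) (n : ℕ) :
    (c + h) ^ n - c ^ n = ∑ i ∈ Finset.range n, c ^ i * h ^ (n - i) * (n.choose i : K) := by
  rw [add_pow, Finset.sum_range_succ]
  simp [Nat.choose_self]

lemma aux_exp (p : ℕ) (lam₀ : K) (c h : K) (T : ℝ) (hT : 0 ≤ T)
    (h1 : ∀ i < p, ‖lam₀ / (p:K)‖ * ‖((p.choose i : ℕ) : K)‖ * ‖c‖ ^ i * ‖h‖ ^ (p - i) ≤ T)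
    (h2 : ∀ i < p + 1,
      ‖1 - lam₀ / (p:K)‖ * ‖(((p+1).choose i : ℕ) : K)‖ * ‖c‖ ^ i * ‖h‖ ^ (p + 1 - i) ≤ T) :
    ‖Pfam p lam₀ (c + h) - Pfam p lam₀ c‖ ≤ T := by
  have key : Pfam p lam₀ (c + h) - Pfam p lam₀ c
      = (lam₀ / (p:K)) * ((c+h)^p - c^p) + (1 - lam₀/(p:K)) * ((c+h)^(p+1) - c^(p+1)) := by
    simp only [Pfam]; ring
  rw [key, aux_binom, aux_binom, Finset.mul_sum, Finset.mul_sum]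
  refine le_trans (norm_add_le_max _ _) (max_le ?_ ?_)
  · refine norm_sum_le_of_forall_le_of_nonneg hT ?_
    intro i hi
    have : ‖lam₀ / (p:K) * (c ^ i * h ^ (p - i) * (p.choose i : K))‖
        = ‖lam₀ / (p:K)‖ * ‖((p.choose i : ℕ) : K)‖ * ‖c‖ ^ i * ‖h‖ ^ (p - i) := by
      rw [norm_mul, norm_mul, norm_mul, norm_pow, norm_pow]; ring
    rw [this]
    exact h1 i (Finset.mem_range.mp hi)
  · refine norm_sum_le_of_forall_le_of_nonneg hT ?_
    intro i hi
    have : ‖(1 - lam₀ / (p:K)) * (c ^ i * h ^ (p + 1 - i) * ((p+1).choose i : K))‖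
        = ‖1 - lam₀ / (p:K)‖ * ‖(((p+1).choose i : ℕ) : K)‖ * ‖c‖ ^ i * ‖h‖ ^ (p + 1 - i) := by
      rw [norm_mul, norm_mul, norm_mul, norm_pow, norm_pow]; ring
    rw [this]
    exact h2 i (Finset.mem_range.mp hi)

lemma aux_grow (p : ℕ) (hp1 : 1 ≤ p) (lam₀ : K)
    (ha : ‖lam₀ / (p:K)‖ = p) (hb : ‖1 - lam₀ / (p:K)‖ = p)
    (w : K) (hw : ‖w‖ < 1) : ‖Pfam p lam₀ w‖ = p * ‖w‖ ^ p := by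
  rcases eq_or_ne w 0 with rfl | hw0
  · simp [Pfam, zero_pow (by omega : p ≠ 0), zero_pow (by omega : p + 1 ≠ 0)]
  · have hwpos : 0 < ‖w‖ := norm_pos_iff.mpr hw0
    have h1 : ‖lam₀ / (p:K) * w ^ p‖ = (p:ℝ) * ‖w‖ ^ p := by rw [norm_mul, norm_pow, ha]
    have h2 : ‖(1 - lam₀ / (p:K)) * w ^ (p+1)‖ = (p:ℝ) * ‖w‖ ^ (p+1) := by
      rw [norm_mul, norm_pow, hb]
    have hlt : ‖(1 - lam₀ / (p:K)) * w ^ (p+1)‖ < ‖lam₀ / (p:K) * w ^ p‖ := by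
      rw [h1, h2]
      have h3 : ‖w‖ ^ (p+1) < ‖w‖ ^ p := by
        rw [pow_succ]
        nlinarith [pow_pos hwpos p]
      have hppos : (0:ℝ) < p := by exact_mod_cast Nat.lt_of_lt_of_le Nat.zero_lt_one hp1
      nlinarith
    have h4 : Pfam p lam₀ w = lam₀ / (p:K) * w ^ p + (1 - lam₀ / (p:K)) * w ^ (p+1) := rfl
    rw [h4, norm_add_eq_max_of_norm_ne_norm hlt.ne', max_eq_left hlt.le, h1]

lemma aux_step1 (p : ℕ) (hp1 : 1 ≤ p) (lam₀ : K)
    (ha : ‖lam₀ / (p:K)‖ = p) (hb : ‖1 - lam₀ / (p:K)‖ = p)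
    (c h : K) (hc : ‖c‖ ≤ 1) (hh : ‖h‖ ≤ 1) :
    ‖Pfam p lam₀ (c + h) - Pfam p lam₀ c‖ ≤ (p:ℝ) * ‖h‖ := by
  have hppos : (0:ℝ) < p := by exact_mod_cast Nat.lt_of_lt_of_le Nat.zero_lt_one hp1
  refine aux_exp p lam₀ c h _ (by positivity) ?_ ?_
  · intro i hi
    rw [ha]
    have he : ‖h‖ ^ (p - i) ≤ ‖h‖ := pow_le_of_le_one (norm_nonneg _) hh (by omega)
    calc (p:ℝ) * ‖((p.choose i : ℕ) : K)‖ * ‖c‖ ^ i * ‖h‖ ^ (p - i)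
        ≤ (p:ℝ) * 1 * 1 ^ i * ‖h‖ := by
          gcongr
          exact norm_natCast_le_one K _
      _ = (p:ℝ) * ‖h‖ := by ring
  · intro i hi
    rw [hb]
    have he : ‖h‖ ^ (p + 1 - i) ≤ ‖h‖ := pow_le_of_le_one (norm_nonneg _) hh (by omega)
    calc (p:ℝ) * ‖(((p+1).choose i : ℕ) : K)‖ * ‖c‖ ^ i * ‖h‖ ^ (p + 1 - i)
        ≤ (p:ℝ) * 1 * 1 ^ i * ‖h‖ := by
          gcongr
          exact norm_natCast_le_one K _
      _ = (p:ℝ) * ‖h‖ := by ring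

lemma aux_step0 (p : ℕ) (hp : p.Prime) (hpnorm : ‖(p : K)‖ = (p : ℝ)⁻¹) (lam₀ : K)
    (ha : ‖lam₀ / (p:K)‖ = p) (hb : ‖1 - lam₀ / (p:K)‖ = p)
    (S r0 : ℝ) (hr0pos : 0 < r0) (hkey : (p:ℝ) * r0 ^ (p - 1) = 1)
    (hSp : S ^ (p - 1) = r0 ^ p)
    (c h : K) (r : ℝ) (hcr : ‖c‖ ≤ r) (hr0r : r0 ≤ r) (hr1 : r ≤ 1) (hhS : ‖h‖ ≤ S) :
    ‖Pfam p lam₀ (c + h) - Pfam p lam₀ c‖ ≤ ((p:ℝ) * r ^ p) * ‖h‖ := by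
  have hp2 := hp.two_le
  have hppos : (0:ℝ) < p := by positivity
  have hrpos : 0 < r := lt_of_lt_of_le hr0pos hr0r
  have hr01 : r0 ≤ 1 := by
    by_contra hgt
    push_neg at hgt
    have h1 : (1:ℝ) < r0 ^ (p - 1) := one_lt_pow₀ hgt (by omega)
    nlinarith
  have hSr0 : S ≤ r0 := by
    have h1 : S ^ (p - 1) ≤ r0 ^ (p - 1) := by
      rw [hSp, aux_split r0 p (by omega)]
      nlinarith [pow_nonneg hr0pos.le (p - 1)]
    exact le_of_pow_le_pow_left₀ (by omega) hr0pos.le h1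
  have hhr : ‖h‖ ≤ r := hhS.trans (hSr0.trans hr0r)
  have hpr : 1 ≤ (p:ℝ) * r := by
    have h1 : r0 ^ (p - 1) ≤ r0 := pow_le_of_le_one hr0pos.le hr01 (by omega)
    nlinarith
  have hhp : ‖h‖ ^ (p - 1) ≤ r ^ p := by
    calc ‖h‖ ^ (p - 1) ≤ S ^ (p - 1) := pow_le_pow_left₀ (norm_nonneg _) hhS _
      _ = r0 ^ p := hSp
      _ ≤ r ^ p := pow_le_pow_left₀ hr0pos.le hr0r _
  refine aux_exp p lam₀ c h _ (by positivity) ?_ ?_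
  · intro i hi
    rw [ha]
    rcases Nat.eq_zero_or_pos i with rfl | hi1
    · simp only [Nat.choose_zero_right, Nat.cast_one, norm_one, pow_zero, Nat.sub_zero,
        mul_one, one_mul]
      calc (p:ℝ) * ‖h‖ ^ p = (p:ℝ) * (‖h‖ ^ (p - 1) * ‖h‖) := by
            rw [← aux_split ‖h‖ p (by omega)]
        _ ≤ (p:ℝ) * (r ^ p * ‖h‖) := by gcongr
        _ = (p:ℝ) * r ^ p * ‖h‖ := by ring
    · have hC : ‖((p.choose i : ℕ) : K)‖ ≤ (p:ℝ)⁻¹ := by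
        obtain ⟨t, ht⟩ := (Nat.Prime.dvd_choose_self hp (by omega) hi)
        rw [ht, Nat.cast_mul, norm_mul, hpnorm]
        exact mul_le_of_le_one_right (by positivity) (norm_natCast_le_one K t)
      have hh1 : ‖h‖ ^ (p - i) ≤ r ^ (p - i - 1) * ‖h‖ := by
        rw [aux_split ‖h‖ (p - i) (by omega)]
        exact mul_le_mul_of_nonneg_right (pow_le_pow_left₀ (norm_nonneg _) hhr _) (norm_nonneg _)
      calc (p:ℝ) * ‖((p.choose i : ℕ) : K)‖ * ‖c‖ ^ i * ‖h‖ ^ (p - i)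
          ≤ (p:ℝ) * (p:ℝ)⁻¹ * r ^ i * (r ^ (p - i - 1) * ‖h‖) := by gcongr
        _ = (r ^ i * r ^ (p - i - 1)) * ‖h‖ := by
            rw [mul_inv_cancel₀ hppos.ne']; ring
        _ = r ^ (p - 1) * ‖h‖ := by rw [← pow_add]; congr 2; omega
        _ ≤ ((p:ℝ) * r) * (r ^ (p - 1) * ‖h‖) := by
            nlinarith [pow_nonneg hrpos.le (p - 1), norm_nonneg h,
              mul_nonneg (pow_nonneg hrpos.le (p-1)) (norm_nonneg h)]
        _ = (p:ℝ) * r ^ p * ‖h‖ := by rw [aux_split r p (by omega)]; ring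
  · intro i hi
    rw [hb]
    have hh1 : ‖h‖ ^ (p + 1 - i) ≤ r ^ (p + 1 - i - 1) * ‖h‖ := by
      rw [aux_split ‖h‖ (p + 1 - i) (by omega)]
      exact mul_le_mul_of_nonneg_right (pow_le_pow_left₀ (norm_nonneg _) hhr _) (norm_nonneg _)
    calc (p:ℝ) * ‖(((p+1).choose i : ℕ) : K)‖ * ‖c‖ ^ i * ‖h‖ ^ (p + 1 - i)
        ≤ (p:ℝ) * 1 * r ^ i * (r ^ (p + 1 - i - 1) * ‖h‖) := by
          gcongr
          exact norm_natCast_le_one K _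
      _ = (p:ℝ) * ((r ^ i * r ^ (p + 1 - i - 1)) * ‖h‖) := by ring
      _ = (p:ℝ) * (r ^ p * ‖h‖) := by rw [← pow_add]; congr 3; omega
      _ = (p:ℝ) * r ^ p * ‖h‖ := by ring

end AuxLemmas

/-- If `x ∈ K(P_{λ₀})` has itinerary `0^{m₀} 1^{M₀} 0^{m₁} 1^{M₁} …` (with respect to
`B_0 = {|z| < 1}` and `B_1 = {|z − 1| < 1}`), where the positive integers `m_i, M_i`
satisfy `ρ_{m_i−1}·…·ρ_1·p^{M_i} ≤ 1`, then the closed ball `{z : |z − x| ≤ S}` is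
contained in the filled Julia set `K(P_{λ₀})`.  Here `S > 0` satisfies
`p·S^{p−1} = p^{-1/(p-1)}`, `ρ_0 = 1`, `p·ρ_n^p = ρ_{n−1}`, and `N i` is the start of the
`i`-th block.  `K` plays the role of `ℂ_p`. -/
theorem statement6 (p : ℕ) (hp : p.Prime)
    {K : Type*} [NontriviallyNormedField K] [IsAlgClosed K] [CompleteSpace K]
    [IsUltrametricDist K] [CharZero K]
    (hpnorm : ‖(p : K)‖ = (p : ℝ)⁻¹)
    (S : ℝ) (hS : 0 < S) (hSdef : (p : ℝ) * S ^ (p - 1) = (p : ℝ) ^ (-(1:ℝ) / ((p : ℝ) - 1)))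
    (ρseq : ℕ → ℝ) (hρ0 : ρseq 0 = 1) (hρpos : ∀ n, 0 < ρseq n)
    (hρrec : ∀ n : ℕ, (p : ℝ) * ρseq (n + 1) ^ p = ρseq n)
    (m M : ℕ → ℕ) (hm : ∀ i, 1 ≤ m i) (hM : ∀ i, 1 ≤ M i)
    (hprod : ∀ i : ℕ, (∏ j ∈ Finset.Ico 1 (m i), ρseq j) * (p : ℝ) ^ (M i) ≤ 1)
    (lam₀ : K) (hlam₀ : ‖lam₀ - 1‖ < 1)
    (x : K) (hx : ∃ C : ℝ, ∀ n : ℕ, ‖(Pfam p lam₀)^[n] x‖ ≤ C)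
    -- `N i` is the index at which the `i`-th block `0^{m_i} 1^{M_i}` of the itinerary starts
    (N : ℕ → ℕ) (hN0 : N 0 = 0) (hNrec : ∀ i : ℕ, N (i + 1) = N i + m i + M i)
    -- the itinerary of `x` is `0^{m₀} 1^{M₀} 0^{m₁} 1^{M₁} …`
    (hit0 : ∀ i : ℕ, ∀ j < m i, ‖(Pfam p lam₀)^[N i + j] x‖ < 1)
    (hit1 : ∀ i : ℕ, ∀ j < M i, ‖(Pfam p lam₀)^[N i + m i + j] x - 1‖ < 1) :
    ∀ z ∈ closedBall x S, ∃ C : ℝ, ∀ n : ℕ, ‖(Pfam p lam₀)^[n] z‖ ≤ C := by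
  intro z hz
  have hp2 := hp.two_le
  have hpcast : (2:ℝ) ≤ (p:ℝ) := by exact_mod_cast hp2
  have hppos : (0:ℝ) < p := by linarith
  set r0 : ℝ := (p : ℝ) ^ (-(1:ℝ) / ((p : ℝ) - 1)) with hr0def
  have hr0pos : 0 < r0 := Real.rpow_pos_of_pos hppos _
  have hkey : (p:ℝ) * r0 ^ (p - 1) = 1 := aux_r0key p hp2
  have hr01 : r0 ≤ 1 := by
    by_contra hgt
    push_neg at hgt
    have h1 : (1:ℝ) < r0 ^ (p - 1) := one_lt_pow₀ hgt (by omega)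
    nlinarith
  -- ‖λ₀‖ = 1 and the two coefficient norms
  have hlam1 : ‖lam₀‖ = 1 := aux_norm_eq_one hlam₀
  have ha : ‖lam₀ / (p:K)‖ = (p:ℝ) := by
    rw [norm_div, hlam1, hpnorm, one_div, inv_inv]
  have hb : ‖1 - lam₀ / (p:K)‖ = (p:ℝ) := by
    have h1 : ‖(1:K)‖ ≠ ‖-(lam₀ / (p:K))‖ := by
      rw [norm_one, norm_neg, ha]
      intro hc
      linarith
    have h2 : (1:K) - lam₀ / (p:K) = 1 + -(lam₀ / (p:K)) := by ring
    rw [h2, IsUltrametricDist.norm_add_eq_max_of_norm_ne_norm h1, norm_one, norm_neg, ha]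
    exact max_eq_right (by linarith)
  -- arithmetic facts about S and r0
  have hrpow : r0 ^ (p - 1) = (p:ℝ)⁻¹ := by
    apply mul_left_cancel₀ hppos.ne'
    rw [hkey, mul_inv_cancel₀ hppos.ne']
  have hSp : S ^ (p - 1) = r0 ^ p := by
    have h1 : S ^ (p - 1) = r0 * (p:ℝ)⁻¹ := by
      apply mul_left_cancel₀ hppos.ne'
      rw [hSdef]
      field_simp
    rw [h1, ← hrpow, aux_split r0 p (by omega)]
    ring
  have hSr0 : S ≤ r0 := by
    have h3 : S ^ (p - 1) ≤ r0 ^ (p - 1) := by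
      rw [hSp, aux_split r0 p (by omega)]
      exact mul_le_of_le_one_right (pow_nonneg hr0pos.le _) hr01
    exact le_of_pow_le_pow_left₀ (by omega) hr0pos.le h3
  have hS1 : S ≤ 1 := hSr0.trans hr01
  -- facts about ρseq
  have hρle1 : ∀ n, ρseq n ≤ 1 := by
    intro n
    induction n with
    | zero => rw [hρ0]
    | succ n ih =>
      by_contra hgt
      push_neg at hgt
      have h1 : (1:ℝ) < ρseq (n+1) ^ p := one_lt_pow₀ hgt (by omega)
      have h2 := hρrec n
      nlinarith
  have hρge : ∀ n, r0 ≤ ρseq n := by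
    intro n
    induction n with
    | zero => rw [hρ0]; exact hr01
    | succ n ih =>
      have h2 : (p:ℝ) * r0 ^ p = r0 := by
        rw [aux_split r0 p (by omega), ← mul_assoc, hkey, one_mul]
      have h3 : r0 ^ p ≤ ρseq (n+1) ^ p := by
        have h4 := hρrec n
        nlinarith
      exact le_of_pow_le_pow_left₀ (by omega) (hρpos (n+1)).le h3
  -- injectivity of p-th powers on nonnegatives
  have hpowinj : ∀ a b : ℝ, 0 ≤ a → 0 ≤ b → a ^ p = b ^ p → a = b := by
    intro a b ha' hb' hab
    rcases lt_trichotomy a b with hl | he | hl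
    · exact absurd hab (ne_of_lt (pow_lt_pow_left₀ hl ha' (by omega)))
    · exact he
    · exact absurd hab.symm (ne_of_lt (pow_lt_pow_left₀ hl hb' (by omega)))
  -- norms of the orbit of x along a 0-block
  have hxnorm : ∀ i, ∀ k ≤ m i, ‖(Pfam p lam₀)^[N i + (m i - k)] x‖ = ρseq k := by
    intro i k
    induction k with
    | zero =>
      intro _
      rw [hρ0, Nat.sub_zero]
      have h1 := hit1 i 0 (hM i)
      rw [Nat.add_zero] at h1
      exact aux_norm_eq_one h1
    | succ k ih =>
      intro hk
      have ih2 := ih (by omega)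
      have ht : N i + (m i - k) = (N i + (m i - (k+1))) + 1 := by omega
      rw [ht, Function.iterate_succ_apply'] at ih2
      have hlt : ‖(Pfam p lam₀)^[N i + (m i - (k+1))] x‖ < 1 := hit0 i (m i - (k+1)) (by omega)
      rw [aux_grow p (by omega) lam₀ ha hb _ hlt] at ih2
      refine hpowinj _ _ (norm_nonneg _) (hρpos (k+1)).le ?_
      apply mul_left_cancel₀ hppos.ne'
      rw [ih2, hρrec k]
  -- decomposition of any index into blocks
  have hdecomp : ∀ n, ∃ i j, n = N i + j ∧ j < m i + M i := by
    intro n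
    induction n with
    | zero => exact ⟨0, 0, by rw [hN0], by have := hm 0; have := hM 0; omega⟩
    | succ n ih =>
      obtain ⟨i, j, hn, hj⟩ := ih
      by_cases hcase : j + 1 < m i + M i
      · exact ⟨i, j + 1, by omega, hcase⟩
      · exact ⟨i + 1, 0, by rw [hNrec i]; omega, by have := hm (i+1); have := hM (i+1); omega⟩
  have hxle1 : ∀ n, ‖(Pfam p lam₀)^[n] x‖ ≤ 1 := by
    intro n
    obtain ⟨i, j, rfl, hj⟩ := hdecomp n
    by_cases hcase : j < m i
    · exact (hit0 i j hcase).le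
    · have h1 := hit1 i (j - m i) (by omega)
      rw [show N i + m i + (j - m i) = N i + j by omega] at h1
      exact le_of_eq (aux_norm_eq_one h1)
  -- the two step estimates for d n = ‖f^[n] z - f^[n] x‖
  have hstepA : ∀ i, ∀ j < m i,
      ‖(Pfam p lam₀)^[N i + j] z - (Pfam p lam₀)^[N i + j] x‖ ≤ S →
      ‖(Pfam p lam₀)^[N i + j + 1] z - (Pfam p lam₀)^[N i + j + 1] x‖ ≤
        ρseq (m i - j - 1) * ‖(Pfam p lam₀)^[N i + j] z - (Pfam p lam₀)^[N i + j] x‖ := by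
    intro i j hj hdS
    have hxt : ‖(Pfam p lam₀)^[N i + j] x‖ = ρseq (m i - j) := by
      have h1 := hxnorm i (m i - j) (by omega)
      rwa [show N i + (m i - (m i - j)) = N i + j by omega] at h1
    have h2 := aux_step0 p hp hpnorm lam₀ ha hb S r0 hr0pos hkey hSp
      ((Pfam p lam₀)^[N i + j] x) ((Pfam p lam₀)^[N i + j] z - (Pfam p lam₀)^[N i + j] x)
      (ρseq (m i - j)) hxt.le (hρge _) (hρle1 _) hdS
    rw [show (Pfam p lam₀)^[N i + j] x +
        ((Pfam p lam₀)^[N i + j] z - (Pfam p lam₀)^[N i + j] x)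
        = (Pfam p lam₀)^[N i + j] z by ring] at h2
    have h3 : (p:ℝ) * ρseq (m i - j) ^ p = ρseq (m i - j - 1) := by
      have h4 := hρrec (m i - j - 1)
      rwa [show m i - j - 1 + 1 = m i - j by omega] at h4
    rw [Function.iterate_succ_apply', Function.iterate_succ_apply']
    calc ‖Pfam p lam₀ ((Pfam p lam₀)^[N i + j] z) - Pfam p lam₀ ((Pfam p lam₀)^[N i + j] x)‖
        ≤ ((p:ℝ) * ρseq (m i - j) ^ p) *
          ‖(Pfam p lam₀)^[N i + j] z - (Pfam p lam₀)^[N i + j] x‖ := h2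
      _ = ρseq (m i - j - 1) * ‖(Pfam p lam₀)^[N i + j] z - (Pfam p lam₀)^[N i + j] x‖ := by
          rw [h3]
  have hstepB : ∀ i, ∀ j < M i,
      ‖(Pfam p lam₀)^[N i + m i + j] z - (Pfam p lam₀)^[N i + m i + j] x‖ ≤ S →
      ‖(Pfam p lam₀)^[N i + m i + j + 1] z - (Pfam p lam₀)^[N i + m i + j + 1] x‖ ≤
        (p:ℝ) * ‖(Pfam p lam₀)^[N i + m i + j] z - (Pfam p lam₀)^[N i + m i + j] x‖ := by
    intro i j hj hdS
    have hxt : ‖(Pfam p lam₀)^[N i + m i + j] x‖ = 1 := aux_norm_eq_one (hit1 i j hj)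
    have h2 := aux_step1 p (by omega) lam₀ ha hb
      ((Pfam p lam₀)^[N i + m i + j] x)
      ((Pfam p lam₀)^[N i + m i + j] z - (Pfam p lam₀)^[N i + m i + j] x)
      hxt.le (hdS.trans hS1)
    rw [show (Pfam p lam₀)^[N i + m i + j] x +
        ((Pfam p lam₀)^[N i + m i + j] z - (Pfam p lam₀)^[N i + m i + j] x)
        = (Pfam p lam₀)^[N i + m i + j] z by ring] at h2
    rw [Function.iterate_succ_apply', Function.iterate_succ_apply']
    exact h2
  -- conclude via the combinatorial lemma
  have hd0 : ‖(Pfam p lam₀)^[0] z - (Pfam p lam₀)^[0] x‖ ≤ S := by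
    have h1 := mem_closedBall.mp hz
    rw [dist_eq_norm] at h1
    simpa using h1
  have hdle : ∀ n, ‖(Pfam p lam₀)^[n] z - (Pfam p lam₀)^[n] x‖ ≤ S :=
    aux_main S hS ρseq hρ0 hρpos hρle1 (p:ℝ) (by linarith) m M N hm hM hN0 hNrec hprod
      (fun n => ‖(Pfam p lam₀)^[n] z - (Pfam p lam₀)^[n] x‖) hd0 hstepA hstepB
  refine ⟨1, fun n => ?_⟩
  rw [show (Pfam p lam₀)^[n] z
      = (Pfam p lam₀)^[n] x + ((Pfam p lam₀)^[n] z - (Pfam p lam₀)^[n] x) by ring]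
  exact le_trans (IsUltrametricDist.norm_add_le_max _ _)
    (max_le (hxle1 n) ((hdle n).trans hS1))
end

section
/- Let m ≥ 1 and let z₀, z₁ ∈ ℂ_p with |z₀ − 1| ≤ p^{−m} and |z₁ − 1| ≤ p^{−m}. If λ₀, λ₁ ∈ Λ satisfy |z₀ − z₁| = |λ₀ − λ₁|, then |P_{λ₀}^m(z₀) − P_{λ₁}^m(z₁)| = p^m·|λ₀ − λ₁|. -/
open Filter Metric

section aux

variable {K : Type*} [NontriviallyNormedField K] [IsUltrametricDist K]

lemma norm_pow_sub_pow_le (x y : K) (hx : ‖x‖ ≤ 1) (hy : ‖y‖ ≤ 1) (n : ℕ) :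
    ‖x ^ n - y ^ n‖ ≤ ‖x - y‖ := by
  rw [← geom_sum₂_mul, norm_mul]
  calc ‖∑ i ∈ Finset.range n, x ^ i * y ^ (n - 1 - i)‖ * ‖x - y‖
      ≤ 1 * ‖x - y‖ := by
        apply mul_le_mul_of_nonneg_right _ (norm_nonneg _)
        apply IsUltrametricDist.norm_sum_le_of_forall_le_of_nonneg zero_le_one
        intro i _
        rw [norm_mul, norm_pow, norm_pow]
        exact mul_le_one₀ (pow_le_one₀ (norm_nonneg _) hx)
          (by positivity) (pow_le_one₀ (norm_nonneg _) hy)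
    _ = ‖x - y‖ := one_mul _

lemma norm_eq_one_of_sub_lt {a : K} (h : ‖a - 1‖ < 1) : ‖a‖ = 1 := by
  have : a = (a - 1) + 1 := by ring
  rw [this, IsUltrametricDist.norm_add_eq_max_of_norm_ne_norm (by simp; linarith [h])]
  simp [le_of_lt h]

omit [IsUltrametricDist K] in
/-- Key identity: `Pfam p lam z = z^p * (1 + (z-1)*(1 - lam/p))`. -/
lemma Pfam_eq (p : ℕ) (lam z : K) :
    Pfam p lam z = z ^ p * (1 + (z - 1) * (1 - lam / (p : K))) := by
  simp only [Pfam, pow_succ]; ring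


lemma stepA (p : ℕ) (hp1 : 1 < (p : ℝ)) (hpnorm : ‖(p : K)‖ = (p : ℝ)⁻¹)
    (lam z : K) (hlam : ‖lam‖ ≤ 1) (hz : ‖z - 1‖ ≤ (p : ℝ)⁻¹) :
    ‖Pfam p lam z - 1‖ ≤ (p : ℝ) * ‖z - 1‖ := by
  have hppos : (0:ℝ) < p := one_pos.trans hp1
  have hcn : ‖1 - lam / (p : K)‖ ≤ (p : ℝ) := by
    rw [sub_eq_add_neg]
    refine (IsUltrametricDist.norm_add_le_max _ _).trans
      (max_le (by rw [norm_one]; exact hp1.le) ?_)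
    rw [norm_neg, norm_div, hpnorm, div_eq_mul_inv, inv_inv]
    calc ‖lam‖ * p ≤ 1 * p := by gcongr
      _ = p := one_mul _
  have hz1 : ‖z‖ ≤ 1 :=
    (norm_eq_one_of_sub_lt (lt_of_le_of_lt hz (inv_lt_one_of_one_lt₀ hp1))).le
  have hid : Pfam p lam z - 1 =
      (z ^ p - 1) * (1 + (z - 1) * (1 - lam / (p : K))) + (z - 1) * (1 - lam / (p : K)) := by
    rw [Pfam_eq]; ring
  rw [hid]
  refine (IsUltrametricDist.norm_add_le_max _ _).trans (max_le ?_ ?_)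
  · rw [norm_mul]
    calc ‖z ^ p - 1‖ * ‖1 + (z - 1) * (1 - lam / (p : K))‖ ≤ ‖z - 1‖ * 1 := by
          apply mul_le_mul
          · simpa using norm_pow_sub_pow_le z 1 hz1 (by simp) p
          · refine (IsUltrametricDist.norm_add_le_max _ _).trans (max_le (by simp) ?_)
            rw [norm_mul]
            calc ‖z - 1‖ * ‖1 - lam / (p : K)‖ ≤ (p:ℝ)⁻¹ * p :=
                  mul_le_mul hz hcn (norm_nonneg _) (by positivity)
              _ = 1 := inv_mul_cancel₀ (by positivity)
          · positivity
          · positivity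
      _ = ‖z - 1‖ := mul_one _
      _ ≤ p * ‖z - 1‖ := le_mul_of_one_le_left (norm_nonneg _) hp1.le
  · rw [norm_mul, mul_comm]
    exact mul_le_mul_of_nonneg_right hcn (norm_nonneg _)

lemma stepB (p : ℕ) (hp1 : 1 < (p : ℝ)) (hpnorm : ‖(p : K)‖ = (p : ℝ)⁻¹)
    (lam₀ lam₁ a b : K) (hl0 : ‖lam₀‖ = 1)
    (ha : ‖a - 1‖ ≤ (p:ℝ)⁻¹) (hb : ‖b - 1‖ ≤ (p:ℝ)⁻¹)
    (hab : a ≠ b)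
    (hlt : ‖b - 1‖ * ‖lam₀ - lam₁‖ < ‖a - b‖) :
    ‖Pfam p lam₀ a - Pfam p lam₁ b‖ = (p:ℝ) * ‖a - b‖ := by
  have hppos : (0:ℝ) < p := one_pos.trans hp1
  have hinvlt : (p:ℝ)⁻¹ < 1 := inv_lt_one_of_one_lt₀ hp1
  have hA : ‖a‖ = 1 := norm_eq_one_of_sub_lt (ha.trans_lt hinvlt)
  have hB : ‖b‖ = 1 := norm_eq_one_of_sub_lt (hb.trans_lt hinvlt)
  have habpos : (0:ℝ) < ‖a - b‖ := norm_pos_iff.mpr (sub_ne_zero.mpr hab)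
  have hc₀ : ‖1 - lam₀ / (p:K)‖ = (p:ℝ) := by
    have h1 : ‖lam₀ / (p:K)‖ = (p:ℝ) := by
      rw [norm_div, hl0, hpnorm, one_div, inv_inv]
    have h2 : (1 : K) - lam₀ / (p:K) = -(lam₀ / (p:K)) + 1 := by ring
    rw [h2, IsUltrametricDist.norm_add_eq_max_of_norm_ne_norm
      (by rw [norm_neg, h1, norm_one]; exact ne_of_gt hp1)]
    rw [norm_neg, h1, norm_one]
    exact max_eq_left hp1.le
  have hid : Pfam p lam₀ a - Pfam p lam₁ b =
      b ^ p * (a - b) * (1 - lam₀ / (p:K)) +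
      ((a ^ p - b ^ p) * (1 + (a - 1) * (1 - lam₀ / (p:K))) +
        b ^ p * (b - 1) * ((lam₁ - lam₀) / (p:K))) := by
    simp only [Pfam_eq]
    field_simp
    ring
  have hT2 : ‖b ^ p * (a - b) * (1 - lam₀ / (p:K))‖ = (p:ℝ) * ‖a - b‖ := by
    rw [norm_mul, norm_mul, norm_pow, hB, one_pow, one_mul, hc₀, mul_comm]
  have hT1 : ‖(a ^ p - b ^ p) * (1 + (a - 1) * (1 - lam₀ / (p:K)))‖ < (p:ℝ) * ‖a - b‖ := by
    calc ‖(a ^ p - b ^ p) * (1 + (a - 1) * (1 - lam₀ / (p:K)))‖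
        ≤ ‖a - b‖ * 1 := by
          rw [norm_mul]
          apply mul_le_mul (norm_pow_sub_pow_le a b hA.le hB.le p)
          · refine (IsUltrametricDist.norm_add_le_max _ _).trans (max_le (by simp) ?_)
            rw [norm_mul]
            calc ‖a - 1‖ * ‖1 - lam₀ / (p:K)‖ ≤ (p:ℝ)⁻¹ * p :=
                  mul_le_mul ha hc₀.le (norm_nonneg _) (by positivity)
              _ = 1 := inv_mul_cancel₀ (by positivity)
          · positivity
          · positivity
      _ = ‖a - b‖ := mul_one _
      _ < (p:ℝ) * ‖a - b‖ := (lt_mul_iff_one_lt_left habpos).mpr hp1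
  have hT3 : ‖b ^ p * (b - 1) * ((lam₁ - lam₀) / (p:K))‖ < (p:ℝ) * ‖a - b‖ := by
    rw [norm_mul, norm_mul, norm_pow, hB, one_pow, one_mul, norm_div, hpnorm, norm_sub_rev lam₁ lam₀,
      div_eq_mul_inv, inv_inv]
    calc ‖b - 1‖ * (‖lam₀ - lam₁‖ * p) = (p:ℝ) * (‖b - 1‖ * ‖lam₀ - lam₁‖) := by ring
      _ < (p:ℝ) * ‖a - b‖ := by gcongr
  have hsum : ‖(a ^ p - b ^ p) * (1 + (a - 1) * (1 - lam₀ / (p:K))) +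
        b ^ p * (b - 1) * ((lam₁ - lam₀) / (p:K))‖ < (p:ℝ) * ‖a - b‖ :=
    (IsUltrametricDist.norm_add_le_max _ _).trans_lt (max_lt hT1 hT3)
  rw [hid, IsUltrametricDist.norm_add_eq_max_of_norm_ne_norm
    (by rw [hT2]; exact (ne_of_lt hsum).symm),
    max_eq_left (hsum.le.trans hT2.ge), hT2]

end aux

/-- If `|z₀ − 1| ≤ p^{−m}`, `|z₁ − 1| ≤ p^{−m}` and the parameters `λ₀, λ₁ ∈ Λ` satisfy
`|z₀ − z₁| = |λ₀ − λ₁|`, then `|P_{λ₀}^m(z₀) − P_{λ₁}^m(z₁)| = p^m·|λ₀ − λ₁|`.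
Here `K` plays the role of `ℂ_p`. -/
theorem statement7 (p : ℕ) (hp : p.Prime)
    {K : Type*} [NontriviallyNormedField K] [IsAlgClosed K] [CompleteSpace K]
    [IsUltrametricDist K] [CharZero K]
    (hpnorm : ‖(p : K)‖ = (p : ℝ)⁻¹)
    (m : ℕ) (hm : 1 ≤ m) (z₀ z₁ : K)
    (hz₀ : ‖z₀ - 1‖ ≤ ((p : ℝ) ^ m)⁻¹) (hz₁ : ‖z₁ - 1‖ ≤ ((p : ℝ) ^ m)⁻¹)
    (lam₀ lam₁ : K) (hlam₀ : ‖lam₀ - 1‖ < 1) (hlam₁ : ‖lam₁ - 1‖ < 1)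
    (heq : ‖z₀ - z₁‖ = ‖lam₀ - lam₁‖) :
    ‖(Pfam p lam₀)^[m] z₀ - (Pfam p lam₁)^[m] z₁‖ = (p : ℝ) ^ m * ‖lam₀ - lam₁‖ := by
  have hp1 : (1:ℝ) < p := by exact_mod_cast hp.one_lt
  have hppos : (0:ℝ) < p := one_pos.trans hp1
  by_cases hz : lam₀ = lam₁
  · subst hz
    have hzz : z₀ = z₁ := by
      have h0 : ‖z₀ - z₁‖ = 0 := by simpa using heq
      exact sub_eq_zero.mp (norm_eq_zero.mp h0)
    subst hzz
    simp
  have hd : (0:ℝ) < ‖lam₀ - lam₁‖ := norm_pos_iff.mpr (sub_ne_zero.mpr hz)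
  have hl0 : ‖lam₀‖ = 1 := norm_eq_one_of_sub_lt hlam₀
  have hl1 : ‖lam₁‖ = 1 := norm_eq_one_of_sub_lt hlam₁
  have key : ∀ k, k ≤ m →
      ‖(Pfam p lam₀)^[k] z₀ - 1‖ ≤ ((p:ℝ) ^ (m - k))⁻¹ ∧
      ‖(Pfam p lam₁)^[k] z₁ - 1‖ ≤ ((p:ℝ) ^ (m - k))⁻¹ ∧
      ‖(Pfam p lam₀)^[k] z₀ - (Pfam p lam₁)^[k] z₁‖ = (p:ℝ) ^ k * ‖lam₀ - lam₁‖ := by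
    intro k
    induction k with
    | zero => intro _; simpa using ⟨hz₀, hz₁, heq⟩
    | succ k ih =>
      intro hk
      obtain ⟨h1, h2, h3⟩ := ih (by omega)
      have hsmall : ((p:ℝ) ^ (m - k))⁻¹ ≤ (p:ℝ)⁻¹ := by
        apply inv_anti₀ hppos
        exact le_self_pow₀ hp1.le (by omega)
      have hmul : (p:ℝ) * ((p:ℝ) ^ (m - k))⁻¹ = ((p:ℝ) ^ (m - (k+1)))⁻¹ := by
        have : m - k = (m - (k+1)) + 1 := by omega
        rw [this, pow_succ]
        field_simp
      have hA1 : ‖(Pfam p lam₀)^[k+1] z₀ - 1‖ ≤ ((p:ℝ) ^ (m - (k+1)))⁻¹ := by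
        rw [Function.iterate_succ_apply', ← hmul]
        calc ‖Pfam p lam₀ ((Pfam p lam₀)^[k] z₀) - 1‖
            ≤ (p:ℝ) * ‖(Pfam p lam₀)^[k] z₀ - 1‖ :=
              stepA p hp1 hpnorm lam₀ _ hl0.le (h1.trans hsmall)
          _ ≤ (p:ℝ) * ((p:ℝ) ^ (m - k))⁻¹ := by gcongr
      have hB1 : ‖(Pfam p lam₁)^[k+1] z₁ - 1‖ ≤ ((p:ℝ) ^ (m - (k+1)))⁻¹ := by
        rw [Function.iterate_succ_apply', ← hmul]
        calc ‖Pfam p lam₁ ((Pfam p lam₁)^[k] z₁) - 1‖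
            ≤ (p:ℝ) * ‖(Pfam p lam₁)^[k] z₁ - 1‖ :=
              stepA p hp1 hpnorm lam₁ _ hl1.le (h2.trans hsmall)
          _ ≤ (p:ℝ) * ((p:ℝ) ^ (m - k))⁻¹ := by gcongr
      refine ⟨hA1, hB1, ?_⟩
      rw [Function.iterate_succ_apply', Function.iterate_succ_apply']
      have hab : (Pfam p lam₀)^[k] z₀ ≠ (Pfam p lam₁)^[k] z₁ := by
        intro h
        rw [h, sub_self, norm_zero] at h3
        exact absurd h3.symm (by positivity)
      have hlt : ‖(Pfam p lam₁)^[k] z₁ - 1‖ * ‖lam₀ - lam₁‖ <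
          ‖(Pfam p lam₀)^[k] z₀ - (Pfam p lam₁)^[k] z₁‖ := by
        rw [h3]
        have hb1 : ‖(Pfam p lam₁)^[k] z₁ - 1‖ < (p:ℝ) ^ k := by
          calc ‖(Pfam p lam₁)^[k] z₁ - 1‖ ≤ (p:ℝ)⁻¹ := h2.trans hsmall
            _ < 1 := inv_lt_one_of_one_lt₀ hp1
            _ ≤ (p:ℝ) ^ k := one_le_pow₀ hp1.le
        exact mul_lt_mul_of_pos_right hb1 hd
      rw [stepB p hp1 hpnorm lam₀ lam₁ _ _ hl0 (h1.trans hsmall) (h2.trans hsmall) hab hlt,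
        h3, pow_succ]
      ring
  exact (key m le_rfl).2.2
end

section
/- Let m ≥ 1 and let z₀, z₁ ∈ ℂ_p with |z₀| = |z₁| = ρ_m and |z₀ − z₁| ≤ S. If λ₀, λ₁ ∈ Λ are such that ρ_{m−1}·ρ_{m−2}·…·ρ_1·|z₀ − z₁| < |λ₀ − λ₁| ≤ S, then |P_{λ₀}^m(z₀) − P_{λ₁}^m(z₁)| = |λ₀ − λ₁|. -/
open Filter Metric

section AuxUltra

variable {K : Type*} [NontriviallyNormedField K] [IsUltrametricDist K]

lemma aux_add_norm_right {a b : K} (h : ‖b‖ < ‖a‖) : ‖a + b‖ = ‖a‖ := by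
  rw [IsUltrametricDist.norm_add_eq_max_of_norm_ne_norm h.ne', max_eq_left h.le]

lemma aux_norm_lam {lam : K} (h : ‖lam - 1‖ < 1) : ‖lam‖ = 1 := by
  have : lam = 1 + (lam - 1) := by ring
  rw [this, aux_add_norm_right (by simpa using h), norm_one]

end AuxUltra

section RealFacts

variable {p : ℕ} (hp2 : 2 ≤ p) {S : ℝ} (hS : 0 < S)
  (hSdef : (p : ℝ) * S ^ (p - 1) = (p : ℝ) ^ (-(1:ℝ) / ((p : ℝ) - 1)))
  {ρseq : ℕ → ℝ} (hρ0 : ρseq 0 = 1) (hρpos : ∀ n, 0 < ρseq n)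
  (hρrec : ∀ n : ℕ, (p : ℝ) * ρseq (n + 1) ^ p = ρseq n)

include hp2 in
lemma aux_q1 : (1 : ℝ) < (p : ℝ) := by exact_mod_cast (by omega : 1 < p)

include hp2 in
lemma aux_rho_pos : (0:ℝ) < (p : ℝ) ^ (-(1:ℝ) / ((p : ℝ) - 1)) :=
  Real.rpow_pos_of_pos (by have := aux_q1 hp2; linarith) _

include hp2 in
lemma aux_rho_lt_one : (p : ℝ) ^ (-(1:ℝ) / ((p : ℝ) - 1)) < 1 := by
  have hq := aux_q1 hp2
  exact Real.rpow_lt_one_of_one_lt_of_neg hq (by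
    apply div_neg_of_neg_of_pos <;> nlinarith)

include hp2 in
lemma aux_rho_fix : (p : ℝ) * ((p : ℝ) ^ (-(1:ℝ) / ((p : ℝ) - 1))) ^ p
    = (p : ℝ) ^ (-(1:ℝ) / ((p : ℝ) - 1)) := by
  have hq := aux_q1 hp2
  have hq0 : (0:ℝ) < (p:ℝ) := by linarith
  have hq1 : ((p:ℝ) - 1) ≠ 0 := by linarith
  rw [← Real.rpow_natCast ((p : ℝ) ^ (-(1:ℝ) / ((p : ℝ) - 1))) p, ← Real.rpow_mul hq0.le]
  nth_rewrite 1 [show (p:ℝ) = (p:ℝ) ^ (1:ℝ) by rw [Real.rpow_one]]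
  rw [← Real.rpow_add hq0]
  congr 1
  field_simp
  ring

include hp2 in
lemma aux_one_le_p_rho : (1:ℝ) ≤ (p : ℝ) * (p : ℝ) ^ (-(1:ℝ) / ((p : ℝ) - 1)) := by
  have hq := aux_q1 hp2
  have hq0 : (0:ℝ) < (p:ℝ) := by linarith
  nth_rewrite 1 [show ((p:ℝ)) = (p:ℝ) ^ (1:ℝ) by rw [Real.rpow_one]]
  rw [← Real.rpow_add hq0]
  have hexp : (0:ℝ) ≤ 1 + -1 / ((p : ℝ) - 1) := by
    have h2 : (2:ℝ) ≤ (p:ℝ) := by exact_mod_cast hp2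
    have h1 : (0:ℝ) < (p:ℝ) - 1 := by linarith
    have : 1 + -1 / ((p:ℝ) - 1) = ((p:ℝ) - 2) / ((p:ℝ) - 1) := by field_simp; ring
    rw [this]
    exact div_nonneg (by linarith) h1.le
  calc (1:ℝ) = (p:ℝ) ^ (0:ℝ) := (Real.rpow_zero _).symm
    _ ≤ (p:ℝ) ^ (1 + -1 / ((p : ℝ) - 1)) := Real.rpow_le_rpow_of_exponent_le hq.le hexp

include hp2 hρ0 hρpos hρrec in
lemma aux_rho_le_rhoseq : ∀ n, (p : ℝ) ^ (-(1:ℝ) / ((p : ℝ) - 1)) ≤ ρseq n := by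
  intro n
  induction n with
  | zero => rw [hρ0]; exact (aux_rho_lt_one hp2).le
  | succ n ih =>
    have hq0 : (0:ℝ) < (p:ℝ) := by
      have := aux_q1 hp2; linarith
    have h1 : (p:ℝ) * ((p : ℝ) ^ (-(1:ℝ) / ((p : ℝ) - 1))) ^ p ≤ (p:ℝ) * ρseq (n+1) ^ p := by
      rw [aux_rho_fix hp2, hρrec]; exact ih
    have h2 : ((p : ℝ) ^ (-(1:ℝ) / ((p : ℝ) - 1))) ^ p ≤ ρseq (n+1) ^ p :=
      le_of_mul_le_mul_left h1 hq0
    exact (pow_le_pow_iff_left₀ (aux_rho_pos hp2).le (hρpos (n+1)).le (by omega)).mp h2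

include hp2 hρ0 hρpos hρrec in
lemma aux_rhoseq_le_one : ∀ n, ρseq n ≤ 1 := by
  intro n
  induction n with
  | zero => rw [hρ0]
  | succ n ih =>
    have hq := aux_q1 hp2
    have h1 : (p:ℝ) * ρseq (n+1) ^ p ≤ 1 := by rw [hρrec]; exact ih
    have h2 : ρseq (n+1) ^ p ≤ 1 := by nlinarith [(hρpos (n+1)), pow_pos (hρpos (n+1)) p]
    exact (pow_le_one_iff_of_nonneg (hρpos (n+1)).le (by omega)).mp h2

include hp2 hρ0 hρpos hρrec in
lemma aux_rhoseq_lt_one : ∀ n, ρseq (n + 1) < 1 := by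
  intro n
  have hq := aux_q1 hp2
  have h0 : ρseq n ≤ 1 := aux_rhoseq_le_one hp2 hρ0 hρpos hρrec n
  have h1 : ρseq (n+1) ^ p < 1 := by
    have := hρrec n
    nlinarith [pow_pos (hρpos (n+1)) p]
  exact (pow_lt_one_iff_of_nonneg (hρpos (n+1)).le (by omega)).mp h1

include hp2 hSdef hρ0 hρpos hρrec in
lemma aux_S_pow_le : ∀ n, S ^ (p - 1) ≤ ρseq (n + 1) ^ p := by
  intro n
  have hq := aux_q1 hp2
  have h1 : (p:ℝ) * S ^ (p-1) ≤ (p:ℝ) * ρseq (n+1) ^ p := by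
    rw [hSdef, hρrec]
    exact aux_rho_le_rhoseq hp2 hρ0 hρpos hρrec n
  exact le_of_mul_le_mul_left h1 (by linarith)

include hp2 hS hSdef hρ0 hρpos hρrec in
lemma aux_S_le_rhoseq : ∀ n, S ≤ ρseq (n + 1) := by
  intro n
  have h1 : S ^ (p-1) ≤ ρseq (n+1) ^ p := aux_S_pow_le hp2 hSdef hρ0 hρpos hρrec n
  have h2 : ρseq (n+1) ^ p ≤ ρseq (n+1) ^ (p-1) :=
    pow_le_pow_of_le_one (hρpos (n+1)).le (aux_rhoseq_le_one hp2 hρ0 hρpos hρrec (n+1)) (by omega)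
  exact (pow_le_pow_iff_left₀ hS.le (hρpos (n+1)).le (by omega)).mp (h1.trans h2)

end RealFacts


section Step

variable {K : Type*} [NontriviallyNormedField K] [IsUltrametricDist K]

lemma aux_level (p : ℕ) (hp : p.Prime)
    (hpnorm : ‖(p : K)‖ = (p : ℝ)⁻¹)
    (ρseq : ℕ → ℝ) (hρ0 : ρseq 0 = 1) (hρpos : ∀ n, 0 < ρseq n)
    (hρrec : ∀ n : ℕ, (p : ℝ) * ρseq (n + 1) ^ p = ρseq n)
    (n : ℕ) (z : K) (hz : ‖z‖ = ρseq (n + 1))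
    (lam : K) (hlam : ‖lam - 1‖ < 1) :
    ‖Pfam p lam z‖ = ρseq n := by
  have hp2 := hp.two_le
  have hq : (1:ℝ) < (p:ℝ) := aux_q1 hp2
  have hrpos : 0 < ρseq (n+1) := hρpos (n+1)
  have hr1 : ρseq (n+1) < 1 := aux_rhoseq_lt_one hp2 hρ0 hρpos hρrec n
  have hplam : ‖lam / (p:K)‖ = (p:ℝ) := by
    rw [norm_div, aux_norm_lam hlam, hpnorm, one_div, inv_inv]
  have h1 : ‖lam / (p:K) * z ^ p‖ = ρseq n := by
    rw [norm_mul, hplam, norm_pow, hz, hρrec n]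
  have hop : ‖1 - lam / (p:K)‖ = (p:ℝ) := by
    have e : (1 : K) - lam / (p:K) = -(lam / (p:K)) + 1 := by ring
    rw [e, aux_add_norm_right (by rw [norm_neg, hplam, norm_one]; exact hq), norm_neg, hplam]
  have h2 : ‖(1 - lam / (p:K)) * z ^ (p+1)‖ = ρseq n * ρseq (n+1) := by
    rw [norm_mul, hop, norm_pow, hz, pow_succ, ← mul_assoc, hρrec n]
  have hlt : ‖(1 - lam / (p:K)) * z ^ (p+1)‖ < ‖lam / (p:K) * z ^ p‖ := by
    rw [h1, h2]
    nlinarith [hρpos n]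
  rw [Pfam, aux_add_norm_right hlt, h1]

set_option maxHeartbeats 1000000 in
lemma aux_step (p : ℕ) (hp : p.Prime)
    (hpnorm : ‖(p : K)‖ = (p : ℝ)⁻¹)
    (S : ℝ) (hS : 0 < S)
    (hSdef : (p : ℝ) * S ^ (p - 1) = (p : ℝ) ^ (-(1:ℝ) / ((p : ℝ) - 1)))
    (ρseq : ℕ → ℝ) (hρ0 : ρseq 0 = 1) (hρpos : ∀ n, 0 < ρseq n)
    (hρrec : ∀ n : ℕ, (p : ℝ) * ρseq (n + 1) ^ p = ρseq n)
    (n : ℕ) (z₀ z₁ : K) (hz₀ : ‖z₀‖ = ρseq (n + 1)) (hz₁ : ‖z₁‖ = ρseq (n + 1))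
    (hz : ‖z₀ - z₁‖ ≤ S)
    (lam₀ lam₁ : K) (hlam₀ : ‖lam₀ - 1‖ < 1) (hlam₁ : ‖lam₁ - 1‖ < 1) :
    ‖Pfam p lam₀ z₀ - Pfam p lam₁ z₁‖ ≤ ρseq n * max ‖z₀ - z₁‖ ‖lam₀ - lam₁‖ ∧
    (‖z₀ - z₁‖ < ‖lam₀ - lam₁‖ →
      ‖Pfam p lam₀ z₀ - Pfam p lam₁ z₁‖ = ρseq n * ‖lam₀ - lam₁‖) := by
  have hp2 := hp.two_le
  have hq : (1:ℝ) < (p:ℝ) := aux_q1 hp2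
  have hp0 : (p:ℝ) ≠ 0 := by linarith
  set r := ρseq (n+1) with hrdef
  set d := ‖z₀ - z₁‖ with hddef
  set c := ‖lam₀ - lam₁‖ with hcdef
  have hrpos : 0 < r := hρpos (n+1)
  have hr1 : r < 1 := aux_rhoseq_lt_one hp2 hρ0 hρpos hρrec n
  have hdr : d ≤ r := hz.trans (aux_S_le_rhoseq hp2 hS hSdef hρ0 hρpos hρrec n)
  have hd0 : (0:ℝ) ≤ d := norm_nonneg _
  have hρn : ρseq n = (p:ℝ) * r ^ p := (hρrec n).symm
  have hρnpos : 0 < ρseq n := hρpos n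
  have hpr : (1:ℝ) ≤ (p:ℝ) * r := by
    have h1 := aux_one_le_p_rho hp2
    have h2 := aux_rho_le_rhoseq hp2 hρ0 hρpos hρrec (n+1)
    nlinarith
  have hplam : ‖lam₀ / (p:K)‖ = (p:ℝ) := by
    rw [norm_div, aux_norm_lam hlam₀, hpnorm, one_div, inv_inv]
  have hop : ‖1 - lam₀ / (p:K)‖ = (p:ℝ) := by
    have e : (1 : K) - lam₀ / (p:K) = -(lam₀ / (p:K)) + 1 := by ring
    rw [e, aux_add_norm_right (by rw [norm_neg, hplam, norm_one]; exact hq), norm_neg, hplam]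
  -- binomial expansion
  have hbin : ∀ N : ℕ, z₀ ^ N
      = ∑ k ∈ Finset.range (N + 1), z₁ ^ k * (z₀ - z₁) ^ (N - k) * ((N.choose k : ℕ) : K) := by
    intro N
    have e : z₁ + (z₀ - z₁) = z₀ := by ring
    conv_lhs => rw [← e]
    rw [add_pow]
  have e1 : z₀ ^ p - z₁ ^ p
      = ∑ k ∈ Finset.range p, z₁ ^ k * (z₀ - z₁) ^ (p - k) * ((p.choose k : ℕ) : K) := by
    rw [hbin p, Finset.sum_range_succ, Nat.sub_self, Nat.choose_self]
    simp
  have e2 : z₀ ^ (p+1) - z₁ ^ (p+1)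
      = ∑ k ∈ Finset.range (p+1), z₁ ^ k * (z₀ - z₁) ^ (p + 1 - k) * (((p+1).choose k : ℕ) : K) := by
    rw [hbin (p+1), Finset.sum_range_succ, Nat.sub_self, Nat.choose_self]
    simp
  -- bound on the first part
  have hA1 : ‖lam₀ / (p:K) * (z₀ ^ p - z₁ ^ p)‖ ≤ (p:ℝ) * r ^ p * d := by
    rw [e1, Finset.mul_sum]
    apply IsUltrametricDist.norm_sum_le_of_forall_le_of_nonneg (by positivity)
    intro k hk
    rw [Finset.mem_range] at hk
    rw [norm_mul, hplam, norm_mul, norm_mul, norm_pow, norm_pow, hz₁]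
    rcases Nat.eq_zero_or_pos k with hk0 | hk1
    · subst hk0
      simp only [pow_zero, one_mul, Nat.sub_zero, Nat.choose_zero_right, Nat.cast_one,
        norm_one, mul_one]
      have hsp : d ^ (p - 1) ≤ r ^ p := by
        calc d ^ (p-1) ≤ S ^ (p-1) := pow_le_pow_left₀ hd0 hz _
          _ ≤ r ^ p := aux_S_pow_le hp2 hSdef hρ0 hρpos hρrec n
      have hdp : d ^ p = d ^ (p-1) * d := by
        nth_rewrite 1 [show p = (p-1) + 1 by omega]
        rw [pow_succ]
      rw [hdp]
      nlinarith [mul_le_mul_of_nonneg_right hsp hd0]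
    · obtain ⟨t, ht⟩ := hp.dvd_choose_self (by omega) hk
      have hC : ‖((p.choose k : ℕ) : K)‖ ≤ (p:ℝ)⁻¹ := by
        rw [ht]
        push_cast
        rw [norm_mul, hpnorm]
        have h1 := IsUltrametricDist.norm_natCast_le_one K t
        have h2 : (0:ℝ) < (p:ℝ)⁻¹ := by positivity
        nlinarith [norm_nonneg ((t : ℕ) : K)]
      obtain ⟨j, hj⟩ : ∃ j, p - k = j + 1 := ⟨p - k - 1, by omega⟩
      have hkj : k + j = p - 1 := by omega
      calc (p:ℝ) * (r ^ k * d ^ (p - k) * ‖((p.choose k : ℕ) : K)‖)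
          ≤ (p:ℝ) * (r ^ k * (r ^ j * d) * (p:ℝ)⁻¹) := by
            rw [hj, pow_succ]
            gcongr
        _ = r ^ (k + j) * d := by rw [pow_add]; field_simp
        _ = r ^ (p - 1) * d := by rw [hkj]
        _ ≤ ((p:ℝ) * r ^ p) * d := by
            have h4 : (p:ℝ) * r ^ p = ((p:ℝ) * r) * r ^ (p-1) := by
              nth_rewrite 2 [show p = (p-1) + 1 by omega]
              rw [pow_succ]; ring
            have h5 : r ^ (p-1) ≤ (p:ℝ) * r ^ p := by
              rw [h4]
              nlinarith [pow_pos hrpos (p-1)]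
            exact mul_le_mul_of_nonneg_right h5 hd0
  -- bound on the second part
  have hA2 : ‖(1 - lam₀ / (p:K)) * (z₀ ^ (p+1) - z₁ ^ (p+1))‖ ≤ (p:ℝ) * r ^ p * d := by
    rw [e2, Finset.mul_sum]
    apply IsUltrametricDist.norm_sum_le_of_forall_le_of_nonneg (by positivity)
    intro k hk
    rw [Finset.mem_range] at hk
    rw [norm_mul, hop, norm_mul, norm_mul, norm_pow, norm_pow, hz₁]
    have hC : ‖(((p+1).choose k : ℕ) : K)‖ ≤ 1 := IsUltrametricDist.norm_natCast_le_one K _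
    obtain ⟨j, hj⟩ : ∃ j, p + 1 - k = j + 1 := ⟨p - k, by omega⟩
    have hkj : k + j = p := by omega
    calc (p:ℝ) * (r ^ k * d ^ (p + 1 - k) * ‖(((p+1).choose k : ℕ) : K)‖)
        ≤ (p:ℝ) * (r ^ k * (r ^ j * d) * 1) := by
          rw [hj, pow_succ]
          gcongr
      _ = (p:ℝ) * (r ^ (k + j) * d) := by rw [pow_add]; ring
      _ = (p:ℝ) * r ^ p * d := by rw [hkj]; ring
  have hA : ‖lam₀ / (p:K) * (z₀ ^ p - z₁ ^ p)
      + (1 - lam₀ / (p:K)) * (z₀ ^ (p+1) - z₁ ^ (p+1))‖ ≤ ρseq n * d := by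
    rw [hρn]
    exact (IsUltrametricDist.norm_add_le_max _ _).trans (max_le hA1 hA2)
  have hB : ‖(lam₀ - lam₁) / (p:K) * (z₁ ^ p - z₁ ^ (p+1))‖ = ρseq n * c := by
    have hz1p : ‖z₁ ^ p - z₁ ^ (p+1)‖ = r ^ p := by
      have e : z₁ ^ p - z₁ ^ (p+1) = z₁ ^ p + (-(z₁ ^ (p+1))) := by ring
      have hlt : ‖-(z₁ ^ (p+1))‖ < ‖z₁ ^ p‖ := by
        rw [norm_neg, norm_pow, norm_pow, hz₁, pow_succ]
        nlinarith [pow_pos hrpos p]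
      rw [e, aux_add_norm_right hlt, norm_pow, hz₁]
    rw [norm_mul, norm_div, hpnorm, hz1p, hρn, hcdef]
    field_simp
  have key : Pfam p lam₀ z₀ - Pfam p lam₁ z₁
      = (lam₀ / (p:K) * (z₀ ^ p - z₁ ^ p)
        + (1 - lam₀ / (p:K)) * (z₀ ^ (p+1) - z₁ ^ (p+1)))
        + (lam₀ - lam₁) / (p:K) * (z₁ ^ p - z₁ ^ (p+1)) := by
    simp only [Pfam]
    ring
  constructor
  · rw [key]
    refine (IsUltrametricDist.norm_add_le_max _ _).trans (max_le ?_ ?_)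
    · exact hA.trans (mul_le_mul_of_nonneg_left (le_max_left _ _) hρnpos.le)
    · rw [hB]
      exact mul_le_mul_of_nonneg_left (le_max_right _ _) hρnpos.le
  · intro hdc
    have hlt : ‖lam₀ / (p:K) * (z₀ ^ p - z₁ ^ p)
        + (1 - lam₀ / (p:K)) * (z₀ ^ (p+1) - z₁ ^ (p+1))‖
        < ‖(lam₀ - lam₁) / (p:K) * (z₁ ^ p - z₁ ^ (p+1))‖ := by
      rw [hB]
      exact hA.trans_lt (by nlinarith)
    rw [key, add_comm, aux_add_norm_right hlt, hB]

end Step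

/-- If `|z₀| = |z₁| = ρ_m`, `|z₀ − z₁| ≤ S` and `λ₀, λ₁ ∈ Λ` satisfy
`ρ_{m−1}·…·ρ_1·|z₀ − z₁| < |λ₀ − λ₁| ≤ S`, then
`|P_{λ₀}^m(z₀) − P_{λ₁}^m(z₁)| = |λ₀ − λ₁|`.  Here `S > 0` satisfies
`p·S^{p−1} = p^{-1/(p-1)}`, and `ρ_0 = 1`, `p·ρ_n^p = ρ_{n−1}`.
`K` plays the role of `ℂ_p`. -/
theorem statement8 (p : ℕ) (hp : p.Prime)
    {K : Type*} [NontriviallyNormedField K] [IsAlgClosed K] [CompleteSpace K]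
    [IsUltrametricDist K] [CharZero K]
    (hpnorm : ‖(p : K)‖ = (p : ℝ)⁻¹)
    (S : ℝ) (hS : 0 < S) (hSdef : (p : ℝ) * S ^ (p - 1) = (p : ℝ) ^ (-(1:ℝ) / ((p : ℝ) - 1)))
    (ρseq : ℕ → ℝ) (hρ0 : ρseq 0 = 1) (hρpos : ∀ n, 0 < ρseq n)
    (hρrec : ∀ n : ℕ, (p : ℝ) * ρseq (n + 1) ^ p = ρseq n)
    (m : ℕ) (hm : 1 ≤ m) (z₀ z₁ : K)
    (hz₀ : ‖z₀‖ = ρseq m) (hz₁ : ‖z₁‖ = ρseq m) (hz : ‖z₀ - z₁‖ ≤ S)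
    (lam₀ lam₁ : K) (hlam₀ : ‖lam₀ - 1‖ < 1) (hlam₁ : ‖lam₁ - 1‖ < 1)
    (hlow : (∏ j ∈ Finset.Ico 1 m, ρseq j) * ‖z₀ - z₁‖ < ‖lam₀ - lam₁‖)
    (hup : ‖lam₀ - lam₁‖ ≤ S) :
    ‖(Pfam p lam₀)^[m] z₀ - (Pfam p lam₁)^[m] z₁‖ = ‖lam₀ - lam₁‖ := by
  have hp2 := hp.two_le
  set c := ‖lam₀ - lam₁‖ with hcdef
  have hc0 : 0 < c := by
    have h1 : 0 ≤ (∏ j ∈ Finset.Ico 1 m, ρseq j) * ‖z₀ - z₁‖ :=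
      mul_nonneg (Finset.prod_nonneg fun j _ => (hρpos j).le) (norm_nonneg _)
    linarith
  have key : ∀ k, k + 1 ≤ m →
      ‖(Pfam p lam₀)^[k] z₀‖ = ρseq (m - k) ∧ ‖(Pfam p lam₁)^[k] z₁‖ = ρseq (m - k) ∧
      ‖(Pfam p lam₀)^[k] z₀ - (Pfam p lam₁)^[k] z₁‖ ≤ S ∧
      (‖(Pfam p lam₀)^[k] z₀ - (Pfam p lam₁)^[k] z₁‖ < c ∨
        ‖(Pfam p lam₀)^[k] z₀ - (Pfam p lam₁)^[k] z₁‖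
          ≤ (∏ j ∈ Finset.Ico (m - k) m, ρseq j) * ‖z₀ - z₁‖) := by
    intro k
    induction k with
    | zero =>
      intro _
      simp only [Function.iterate_zero_apply, Nat.sub_zero]
      refine ⟨hz₀, hz₁, hz, Or.inr ?_⟩
      simp [Finset.Ico_self]
    | succ k ih =>
      intro hk1
      obtain ⟨ha, hb, hd, hor⟩ := ih (by omega)
      set ζ₀ := (Pfam p lam₀)^[k] z₀ with hζ₀
      set ζ₁ := (Pfam p lam₁)^[k] z₁ with hζ₁
      have hmk : m - k = (m - (k+1)) + 1 := by omega
      rw [hmk] at ha hb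
      have hstep := aux_step p hp hpnorm S hS hSdef ρseq hρ0 hρpos hρrec (m - (k+1))
        ζ₀ ζ₁ ha hb hd lam₀ lam₁ hlam₀ hlam₁
      have hit₀ : (Pfam p lam₀)^[k+1] z₀ = Pfam p lam₀ ζ₀ := Function.iterate_succ_apply' _ _ _
      have hit₁ : (Pfam p lam₁)^[k+1] z₁ = Pfam p lam₁ ζ₁ := Function.iterate_succ_apply' _ _ _
      rw [hit₀, hit₁]
      have hl₀ : ‖Pfam p lam₀ ζ₀‖ = ρseq (m - (k+1)) :=
        aux_level p hp hpnorm ρseq hρ0 hρpos hρrec _ ζ₀ ha lam₀ hlam₀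
      have hl₁ : ‖Pfam p lam₁ ζ₁‖ = ρseq (m - (k+1)) :=
        aux_level p hp hpnorm ρseq hρ0 hρpos hρrec _ ζ₁ hb lam₁ hlam₁
      have hρle1 := aux_rhoseq_le_one hp2 hρ0 hρpos hρrec (m - (k+1))
      have hρposk := hρpos (m - (k+1))
      obtain ⟨j, hj⟩ : ∃ j, m - (k+1) = j + 1 := ⟨m - (k+1) - 1, by omega⟩
      have hρlt1 : ρseq (m - (k+1)) < 1 := by
        rw [hj]; exact aux_rhoseq_lt_one hp2 hρ0 hρpos hρrec j
      have hmaxS : max ‖ζ₀ - ζ₁‖ c ≤ S := max_le hd hup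
      have hmax0 : 0 ≤ max ‖ζ₀ - ζ₁‖ c := le_trans (norm_nonneg _) (le_max_left _ _)
      refine ⟨hl₀, hl₁, ?_, ?_⟩
      · calc ‖Pfam p lam₀ ζ₀ - Pfam p lam₁ ζ₁‖
            ≤ ρseq (m - (k+1)) * max ‖ζ₀ - ζ₁‖ c := hstep.1
          _ ≤ 1 * S := by
              apply mul_le_mul hρle1 hmaxS hmax0 zero_le_one
          _ = S := one_mul S
      · have case_lt : ‖ζ₀ - ζ₁‖ < c →
            ‖Pfam p lam₀ ζ₀ - Pfam p lam₁ ζ₁‖ < c := by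
          intro h'
          rw [hstep.2 h']
          nlinarith
        rcases hor with hlt | hle
        · exact Or.inl (case_lt hlt)
        · rcases lt_or_ge ‖ζ₀ - ζ₁‖ c with h' | h'
          · exact Or.inl (case_lt h')
          · right
            have hprod : ρseq (m - (k+1)) * ∏ j ∈ Finset.Ico (m - k) m, ρseq j
                = ∏ j ∈ Finset.Ico (m - (k+1)) m, ρseq j := by
              rw [Finset.prod_eq_prod_Ico_succ_bot (by omega : m - (k+1) < m) ρseq, ← hmk]
            calc ‖Pfam p lam₀ ζ₀ - Pfam p lam₁ ζ₁‖
                ≤ ρseq (m - (k+1)) * max ‖ζ₀ - ζ₁‖ c := hstep.1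
              _ = ρseq (m - (k+1)) * ‖ζ₀ - ζ₁‖ := by rw [max_eq_left h']
              _ ≤ ρseq (m - (k+1)) * ((∏ j ∈ Finset.Ico (m - k) m, ρseq j) * ‖z₀ - z₁‖) :=
                  mul_le_mul_of_nonneg_left hle hρposk.le
              _ = (∏ j ∈ Finset.Ico (m - (k+1)) m, ρseq j) * ‖z₀ - z₁‖ := by
                  rw [← hprod]; ring
  obtain ⟨ha, hb, hd, hor⟩ := key (m - 1) (by omega)
  have hm1 : m - (m - 1) = 1 := by omega
  rw [hm1] at ha hb hor
  set ζ₀ := (Pfam p lam₀)^[m-1] z₀ with hζ₀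
  set ζ₁ := (Pfam p lam₁)^[m-1] z₁ with hζ₁
  have hlt : ‖ζ₀ - ζ₁‖ < c := by
    rcases hor with h | h
    · exact h
    · exact lt_of_le_of_lt h hlow
  have hstep := aux_step p hp hpnorm S hS hSdef ρseq hρ0 hρpos hρrec 0
    ζ₀ ζ₁ ha hb hd lam₀ lam₁ hlam₀ hlam₁
  have hit₀ : (Pfam p lam₀)^[m] z₀ = Pfam p lam₀ ζ₀ := by
    conv_lhs => rw [show m = (m-1) + 1 by omega]
    exact Function.iterate_succ_apply' _ _ _
  have hit₁ : (Pfam p lam₁)^[m] z₁ = Pfam p lam₁ ζ₁ := by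
    conv_lhs => rw [show m = (m-1) + 1 by omega]
    exact Function.iterate_succ_apply' _ _ _
  rw [hit₀, hit₁, hstep.2 hlt, hρ0, one_mul]
end

section
/- For every λ ∈ Λ, the map Q*_λ = P_λ + Q has exactly one fixed point z_λ in the closed ball {z ∈ ℂ_p : |z − 1| ≤ |Q(1)|/p}; that is, there exists a unique z_λ with |z_λ − 1| ≤ |Q(1)|/p and Q*_λ(z_λ) = z_λ. -/
open Filter Metric

/-- Evaluation at `z` of the power series with coefficients `a`. -/
noncomputable def Qser {K : Type*} [NontriviallyNormedField K] (a : ℕ → K) (z : K) : K :=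
  ∑' i, a i * z ^ i

/-- The perturbed map `Q*_λ = P_λ + Q`. -/
noncomputable def Qstar {K : Type*} [NontriviallyNormedField K] (p : ℕ) (a : ℕ → K)
    (lam z : K) : K :=
  Pfam p lam z + Qser a z

section Aux

variable {K : Type*} [NontriviallyNormedField K] [IsUltrametricDist K]

/-- norm of `z^n - w^n` for `‖z‖, ‖w‖ ≤ 1`. -/
lemma aux_pow_sub_pow (z w : K) (hz : ‖z‖ ≤ 1) (hw : ‖w‖ ≤ 1) (n : ℕ) :
    ‖z ^ n - w ^ n‖ ≤ ‖z - w‖ := by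
  induction n with
  | zero => simp
  | succ n ih =>
    have hid : z ^ (n + 1) - w ^ (n + 1) = z * (z ^ n - w ^ n) + (z - w) * w ^ n := by ring
    rw [hid]
    refine (IsUltrametricDist.norm_add_le_max _ _).trans (max_le ?_ ?_)
    · rw [norm_mul]
      calc ‖z‖ * ‖z ^ n - w ^ n‖ ≤ 1 * ‖z - w‖ := by
            exact mul_le_mul hz ih (norm_nonneg _) zero_le_one
        _ = ‖z - w‖ := one_mul _
    · rw [norm_mul]
      calc ‖z - w‖ * ‖w ^ n‖ ≤ ‖z - w‖ * 1 := by
            refine mul_le_mul_of_nonneg_left ?_ (norm_nonneg _)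
            rw [norm_pow]; exact pow_le_one₀ (norm_nonneg _) hw
        _ = ‖z - w‖ := mul_one _

/-- norm of `z^n - w^n - n(z-w)` for `z, w` in the ball of radius `r ≤ 1` around 1. -/
lemma aux_pow_sub_pow_sub (r : ℝ) (hr1 : r ≤ 1) (z w : K)
    (hz : ‖z - 1‖ ≤ r) (hw : ‖w - 1‖ ≤ r) (n : ℕ) :
    ‖z ^ n - w ^ n - (n : K) * (z - w)‖ ≤ r * ‖z - w‖ := by
  have hz1 : ‖z‖ ≤ 1 := by
    calc ‖z‖ = ‖(z - 1) + 1‖ := by ring_nf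
      _ ≤ max ‖z - 1‖ ‖(1 : K)‖ := IsUltrametricDist.norm_add_le_max _ _
      _ ≤ 1 := by rw [norm_one]; exact max_le (hz.trans hr1) le_rfl
  have hw1 : ‖w‖ ≤ 1 := by
    calc ‖w‖ = ‖(w - 1) + 1‖ := by ring_nf
      _ ≤ max ‖w - 1‖ ‖(1 : K)‖ := IsUltrametricDist.norm_add_le_max _ _
      _ ≤ 1 := by rw [norm_one]; exact max_le (hw.trans hr1) le_rfl
  induction n with
  | zero => simpa using mul_nonneg ((norm_nonneg (z-1)).trans hz) (norm_nonneg (z - w))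
  | succ n ih =>
    have hid : z ^ (n + 1) - w ^ (n + 1) - ((n : K) + 1) * (z - w)
        = z * (z ^ n - w ^ n - (n : K) * (z - w))
          + (z - w) * ((n : K) * (z - 1) + (w ^ n - 1)) := by ring
    push_cast
    rw [hid]
    refine (IsUltrametricDist.norm_add_le_max _ _).trans (max_le ?_ ?_)
    · rw [norm_mul]
      calc ‖z‖ * ‖z ^ n - w ^ n - (n : K) * (z - w)‖ ≤ 1 * (r * ‖z - w‖) :=
            mul_le_mul hz1 ih (norm_nonneg _) zero_le_one
        _ = r * ‖z - w‖ := one_mul _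
    · rw [norm_mul, mul_comm]
      refine mul_le_mul_of_nonneg_right ?_ (norm_nonneg _)
      refine (IsUltrametricDist.norm_add_le_max _ _).trans (max_le ?_ ?_)
      · rw [norm_mul]
        calc ‖(n : K)‖ * ‖z - 1‖ ≤ 1 * r :=
              mul_le_mul (IsUltrametricDist.norm_natCast_le_one K n) hz (norm_nonneg _) zero_le_one
          _ = r := one_mul _
      · calc ‖w ^ n - 1‖ = ‖w ^ n - 1 ^ n‖ := by rw [one_pow]
          _ ≤ ‖w - 1‖ := aux_pow_sub_pow w 1 hw1 (by simp) n
          _ ≤ r := hw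

end Aux

/-- For every `λ ∈ Λ = {|λ − 1| < 1}`, the map `Q*_λ = P_λ + Q` (where
`‖Q‖_B < ρ = p^{-1/(p-1)}` on `B = {|z| ≤ r̂}`) has exactly one fixed point in the closed
ball `{z : |z − 1| ≤ |Q(1)|/p}`.  Here `K` plays the role of `ℂ_p`. -/
theorem statement9 (p : ℕ) (hp : p.Prime)
    {K : Type*} [NontriviallyNormedField K] [IsAlgClosed K] [CompleteSpace K]
    [IsUltrametricDist K] [CharZero K]
    (hpnorm : ‖(p : K)‖ = (p : ℝ)⁻¹)
    (rhat : ℝ) (hrhat : 1 < rhat) (hrhatval : ∃ x : K, x ≠ 0 ∧ ‖x‖ = rhat)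
    (a : ℕ → K)
    (hQnorm : ∃ C : ℝ, C < (p : ℝ) ^ (-(1:ℝ) / ((p : ℝ) - 1)) ∧ ∀ i : ℕ, ‖a i‖ * rhat ^ i ≤ C)
    (lam : K) (hlam : ‖lam - 1‖ < 1) :
    ∃! z : K, ‖z - 1‖ ≤ ‖Qser a 1‖ / p ∧ Qstar p a lam z = z := by
  obtain ⟨C, hCρ, hCa⟩ := hQnorm
  have hp1 : (1 : ℝ) < (p : ℝ) := by exact_mod_cast hp.one_lt
  have hp0 : (0 : ℝ) < (p : ℝ) := lt_trans one_pos hp1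
  have hpK : (p : K) ≠ 0 := by
    intro h
    rw [h, norm_zero] at hpnorm
    exact absurd hpnorm.symm (by positivity)
  -- C bounds
  have hC0 : 0 ≤ C := le_trans (norm_nonneg (a 0)) (by simpa using hCa 0)
  have hC1 : C < 1 := by
    have hneg : -(1 : ℝ) / ((p : ℝ) - 1) < 0 := by
      apply div_neg_of_neg_of_pos <;> linarith
    exact lt_trans hCρ (Real.rpow_lt_one_of_one_lt_of_neg hp1 hneg)
  have haC : ∀ i, ‖a i‖ ≤ C := fun i => by
    have h1 : (1 : ℝ) ≤ rhat ^ i := one_le_pow₀ hrhat.le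
    calc ‖a i‖ = ‖a i‖ * 1 := (mul_one _).symm
      _ ≤ ‖a i‖ * rhat ^ i := by gcongr
      _ ≤ C := hCa i
  -- summability of Q on the unit ball
  have hsum : ∀ z : K, ‖z‖ ≤ 1 → Summable (fun i => a i * z ^ i) := by
    intro z hz
    refine Summable.of_norm_bounded (g := fun i => C * (rhat⁻¹) ^ i)
      ((summable_geometric_of_lt_one (by positivity) (inv_lt_one_of_one_lt₀ hrhat)).mul_left C) ?_
    intro i
    rw [norm_mul]
    have h1 : ‖a i‖ ≤ C * (rhat⁻¹) ^ i := by
      have hpow : (0 : ℝ) < rhat ^ i := by positivity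
      rw [inv_pow, ← div_eq_mul_inv, le_div_iff₀ hpow]
      exact hCa i
    calc ‖a i‖ * ‖z ^ i‖ ≤ ‖a i‖ * 1 := by
          refine mul_le_mul_of_nonneg_left ?_ (norm_nonneg _)
          rw [norm_pow]; exact pow_le_one₀ (norm_nonneg _) hz
      _ = ‖a i‖ := mul_one _
      _ ≤ C * (rhat⁻¹) ^ i := h1
  -- basic norms
  have hlam1 : ‖lam‖ = 1 := by
    have hle : ‖lam‖ ≤ 1 := by
      calc ‖lam‖ = ‖(lam - 1) + 1‖ := by ring_nf
        _ ≤ max ‖lam - 1‖ ‖(1 : K)‖ := IsUltrametricDist.norm_add_le_max _ _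
        _ ≤ 1 := by rw [norm_one]; exact max_le hlam.le le_rfl
    refine le_antisymm hle ?_
    by_contra h
    push_neg at h
    have : (1 : ℝ) ≤ max ‖lam‖ ‖1 - lam‖ := by
      calc (1 : ℝ) = ‖(1 : K)‖ := norm_one.symm
        _ = ‖lam + (1 - lam)‖ := by ring_nf
        _ ≤ max ‖lam‖ ‖1 - lam‖ := IsUltrametricDist.norm_add_le_max _ _
    have h2 : ‖1 - lam‖ < 1 := by rwa [norm_sub_rev] at hlam
    rcases max_cases ‖lam‖ ‖1 - lam‖ with ⟨he, _⟩ | ⟨he, _⟩ <;> rw [he] at this <;> linarith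
  have hlamp : ‖lam / (p : K)‖ = (p : ℝ) := by
    rw [norm_div, hlam1, hpnorm, one_div, inv_inv]
  set c : K := (p : K) - lam / (p : K) with hc
  have hcnorm : ‖c‖ = (p : ℝ) := by
    have hinv : (p : ℝ)⁻¹ ≤ 1 := inv_le_one_of_one_le₀ hp1.le
    have hne : ‖-(lam / (p : K))‖ ≠ ‖(p : K)‖ := by
      rw [norm_neg, hlamp, hpnorm]
      intro h
      rw [← h] at hinv
      linarith
    have hcc : c = -(lam / (p : K)) + (p : K) := by ring
    rw [hcc, IsUltrametricDist.norm_add_eq_max_of_norm_ne_norm hne, norm_neg, hlamp, hpnorm]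
    exact max_eq_left (by linarith)
  have hcne : c ≠ 0 := by
    intro h
    rw [h, norm_zero] at hcnorm
    linarith
  have h1mlamp : ‖1 - lam / (p : K)‖ = (p : ℝ) := by
    have hne : ‖-(lam / (p : K))‖ ≠ ‖(1 : K)‖ := by
      rw [norm_neg, hlamp, norm_one]; linarith
    have : (1 : K) - lam / (p : K) = -(lam / (p : K)) + 1 := by ring
    rw [this, IsUltrametricDist.norm_add_eq_max_of_norm_ne_norm hne, norm_neg, hlamp, norm_one]
    exact max_eq_left hp1.le
  -- the quantity q and radius r
  set q : ℝ := ‖Qser a 1‖ with hqdef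
  have hqC : q ≤ C := by
    rw [hqdef]
    refine IsUltrametricDist.norm_tsum_le_of_forall_le_of_nonneg hC0 (fun i => ?_)
    simpa using haC i
  have hq0 : 0 ≤ q := norm_nonneg _
  set r : ℝ := q / (p : ℝ) with hrdef
  have hr0 : 0 ≤ r := by positivity
  have hr1 : r ≤ 1 := by
    rw [hrdef, div_le_one hp0]
    nlinarith
  have hpr : (p : ℝ) * r = q := by
    rw [hrdef]; field_simp
  -- membership in the ball implies norm ≤ 1
  have hz1 : ∀ z : K, ‖z - 1‖ ≤ r → ‖z‖ ≤ 1 := by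
    intro z hz
    calc ‖z‖ = ‖(z - 1) + 1‖ := by ring_nf
      _ ≤ max ‖z - 1‖ ‖(1 : K)‖ := IsUltrametricDist.norm_add_le_max _ _
      _ ≤ 1 := by rw [norm_one]; exact max_le (hz.trans hr1) le_rfl
  -- the key estimate
  have key : ∀ z w : K, ‖z - 1‖ ≤ r → ‖w - 1‖ ≤ r →
      ‖(Qstar p a lam z - z) - (Qstar p a lam w - w) - c * (z - w)‖ ≤ C * ‖z - w‖ := by
    intro z w hzr hwr
    have hzz : ‖z‖ ≤ 1 := hz1 z hzr
    have hww : ‖w‖ ≤ 1 := hz1 w hwr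
    -- Q part
    have hQsub : Qser a z - Qser a w = ∑' i, (a i * z ^ i - a i * w ^ i) :=
      (Summable.tsum_sub (hsum z hzz) (hsum w hww)).symm
    have hQbound : ‖Qser a z - Qser a w‖ ≤ C * ‖z - w‖ := by
      rw [hQsub]
      refine IsUltrametricDist.norm_tsum_le_of_forall_le_of_nonneg
        (by positivity) (fun i => ?_)
      have : a i * z ^ i - a i * w ^ i = a i * (z ^ i - w ^ i) := by ring
      rw [this, norm_mul]
      exact mul_le_mul (haC i) (aux_pow_sub_pow z w hzz hww i) (norm_nonneg _) hC0
    -- the algebraic identity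
    have hid : (Qstar p a lam z - z) - (Qstar p a lam w - w) - c * (z - w)
        = lam / (p : K) * (z ^ p - w ^ p - (p : K) * (z - w))
          + (1 - lam / (p : K)) * (z ^ (p + 1) - w ^ (p + 1) - ((p : K) + 1) * (z - w))
          + (Qser a z - Qser a w) := by
      simp only [Qstar, Pfam, hc]
      push_cast
      field_simp
      ring
    rw [hid]
    refine (IsUltrametricDist.norm_add_le_max _ _).trans (max_le
      ((IsUltrametricDist.norm_add_le_max _ _).trans (max_le ?_ ?_)) hQbound)
    · rw [norm_mul, hlamp]
      calc (p : ℝ) * ‖z ^ p - w ^ p - (p : K) * (z - w)‖ ≤ (p : ℝ) * (r * ‖z - w‖) := by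
            refine mul_le_mul_of_nonneg_left ?_ hp0.le
            exact aux_pow_sub_pow_sub r hr1 z w hzr hwr p
        _ = q * ‖z - w‖ := by rw [← hpr]; ring
        _ ≤ C * ‖z - w‖ := mul_le_mul_of_nonneg_right hqC (norm_nonneg _)
    · rw [norm_mul, h1mlamp]
      have hcast : ((p : K) + 1) = ((p + 1 : ℕ) : K) := by push_cast; ring
      rw [hcast]
      calc (p : ℝ) * ‖z ^ (p + 1) - w ^ (p + 1) - ((p + 1 : ℕ) : K) * (z - w)‖
            ≤ (p : ℝ) * (r * ‖z - w‖) := by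
            refine mul_le_mul_of_nonneg_left ?_ hp0.le
            exact aux_pow_sub_pow_sub r hr1 z w hzr hwr (p + 1)
        _ = q * ‖z - w‖ := by rw [← hpr]; ring
        _ ≤ C * ‖z - w‖ := mul_le_mul_of_nonneg_right hqC (norm_nonneg _)
  -- the Newton-type map
  set T : K → K := fun z => z - (Qstar p a lam z - z) / c with hT
  have hQstar1 : Qstar p a lam 1 - 1 = Qser a 1 := by
    simp only [Qstar, Pfam, one_pow, mul_one]
    ring
  have hT1 : ‖T 1 - 1‖ = r := by
    rw [hT]
    simp only
    rw [hQstar1, hrdef, hqdef]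
    rw [show (1 : K) - Qser a 1 / c - 1 = -(Qser a 1 / c) by ring, norm_neg, norm_div, hcnorm]
  have hTlip : ∀ z w : K, ‖z - 1‖ ≤ r → ‖w - 1‖ ≤ r →
      ‖T z - T w‖ ≤ C / (p : ℝ) * ‖z - w‖ := by
    intro z w hzr hwr
    have : T z - T w = -(((Qstar p a lam z - z) - (Qstar p a lam w - w) - c * (z - w)) / c) := by
      rw [hT]
      field_simp
      ring
    rw [this, norm_neg, norm_div, hcnorm]
    calc ‖(Qstar p a lam z - z) - (Qstar p a lam w - w) - c * (z - w)‖ / (p : ℝ)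
        ≤ (C * ‖z - w‖) / (p : ℝ) := by gcongr; exact key z w hzr hwr
      _ = C / (p : ℝ) * ‖z - w‖ := by ring
  -- T maps the ball to itself
  have hmaps : Set.MapsTo T (closedBall (1 : K) r) (closedBall (1 : K) r) := by
    intro z hz
    rw [mem_closedBall, dist_eq_norm] at hz ⊢
    have h1 : ‖T z - T 1‖ ≤ r := by
      calc ‖T z - T 1‖ ≤ C / (p : ℝ) * ‖z - 1‖ := hTlip z 1 hz (by simpa using hr0)
        _ ≤ 1 * r := by
            refine mul_le_mul ?_ hz (norm_nonneg _) zero_le_one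
            rw [div_le_one hp0]; linarith
        _ = r := one_mul _
    calc ‖T z - 1‖ = ‖(T z - T 1) + (T 1 - 1)‖ := by ring_nf
      _ ≤ max ‖T z - T 1‖ ‖T 1 - 1‖ := IsUltrametricDist.norm_add_le_max _ _
      _ ≤ r := max_le h1 (le_of_eq hT1)
  -- contraction on the ball
  have hKlt : C / (p : ℝ) < 1 := by
    rw [div_lt_one hp0]; linarith
  have hcontr : ContractingWith (Real.toNNReal (C / (p : ℝ))) (hmaps.restrict T _ _) := by
    constructor
    · rw [← NNReal.coe_lt_one, Real.coe_toNNReal _ (div_nonneg hC0 hp0.le)]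
      exact hKlt
    · refine LipschitzWith.of_dist_le_mul (fun x y => ?_)
      have hx := x.2
      have hy := y.2
      rw [mem_closedBall, dist_eq_norm] at hx hy
      rw [Subtype.dist_eq, Subtype.dist_eq]
      simp only [Set.MapsTo.val_restrict_apply]
      rw [dist_eq_norm, dist_eq_norm, Real.coe_toNNReal _ (div_nonneg hC0 hp0.le)]
      exact hTlip x.1 y.1 hx hy
  -- apply Banach fixed point theorem
  have h1mem : (1 : K) ∈ closedBall (1 : K) r := by
    rw [mem_closedBall, dist_self]; exact hr0
  obtain ⟨y, hymem, hyfix, -, -⟩ :=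
    hcontr.exists_fixedPoint' (Metric.isClosed_closedBall.isComplete) hmaps h1mem (edist_ne_top _ _)
  rw [mem_closedBall, dist_eq_norm] at hymem
  have hyQ : Qstar p a lam y = y := by
    have h := hyfix
    simp only [Function.IsFixedPt, hT] at h
    have h2 : (Qstar p a lam y - y) / c = 0 := by linear_combination y - h
    rcases div_eq_zero_iff.mp h2 with h3 | h3
    · exact sub_eq_zero.mp h3
    · exact absurd h3 hcne
  refine ⟨y, ⟨hymem, hyQ⟩, ?_⟩
  rintro z ⟨hzmem, hzQ⟩
  by_contra hne
  have hzw0 : 0 < ‖z - y‖ := by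
    rw [norm_pos_iff, sub_ne_zero]
    exact hne
  have e1 : Qstar p a lam z - z = 0 := sub_eq_zero.mpr hzQ
  have e2 : Qstar p a lam y - y = 0 := sub_eq_zero.mpr hyQ
  have hk := key z y hzmem hymem
  rw [e1, e2, show (0 : K) - 0 - c * (z - y) = -(c * (z - y)) by ring,
    norm_neg, norm_mul, hcnorm] at hk
  nlinarith
end

section
/- Let λ ∈ Λ and z ∈ ℂ_p. Then: (i) if ρ < |z| < 1, then |Q_λ(z)| = p·|z|^p > |z|; (ii) if |z| ≤ ρ, then |Q_λ(z)| ≤ ρ; (iii) if |z − 1| < 1, then |Q_λ(z) − 1| = p·|z − 1|; (iv) if 1 < |z| < r̂, then |Q_λ(z)| = p·|z|^{p+1}. -/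
open Filter Metric

/-- The conjugated map `Q_λ(z) = Q*_λ(z + h(λ) − 1) − h(λ) + 1`. -/
noncomputable def Qconj {K : Type*} [NontriviallyNormedField K] (p : ℕ) (a : ℕ → K)
    (h : K → K) (lam z : K) : K :=
  Qstar p a lam (z + h lam - 1) - h lam + 1

namespace Statement11Aux

variable {K : Type*} [NontriviallyNormedField K] [IsUltrametricDist K] [CompleteSpace K]

lemma sub_norm_le (x y : K) : ‖x - y‖ ≤ max ‖x‖ ‖y‖ := by
  rw [sub_eq_add_neg]
  exact (IsUltrametricDist.norm_add_le_max _ _).trans (by rw [norm_neg])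

lemma add_norm_eq {x y : K} (h : ‖y‖ < ‖x‖) : ‖x + y‖ = ‖x‖ := by
  rw [IsUltrametricDist.norm_add_eq_max_of_norm_ne_norm h.ne', max_eq_left h.le]

lemma add_norm_eq' {x y : K} (h : ‖x‖ < ‖y‖) : ‖x + y‖ = ‖y‖ := by
  rw [add_comm]; exact add_norm_eq h

lemma pow_sub_pow {x y : K} (hx : ‖x‖ ≤ 1) (hy : ‖y‖ ≤ 1) (n : ℕ) :
    ‖x ^ n - y ^ n‖ ≤ ‖x - y‖ := by
  induction n with
  | zero => simp
  | succ n ih =>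
    have hid : x ^ (n + 1) - y ^ (n + 1) = x * (x ^ n - y ^ n) + (x - y) * y ^ n := by ring
    rw [hid]
    refine (IsUltrametricDist.norm_add_le_max _ _).trans (max_le ?_ ?_)
    · rw [norm_mul]
      calc ‖x‖ * ‖x ^ n - y ^ n‖ ≤ 1 * ‖x - y‖ :=
            mul_le_mul hx ih (norm_nonneg _) zero_le_one
        _ = ‖x - y‖ := one_mul _
    · rw [norm_mul]
      calc ‖x - y‖ * ‖y ^ n‖ ≤ ‖x - y‖ * 1 := by
            refine mul_le_mul_of_nonneg_left ?_ (norm_nonneg _)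
            rw [norm_pow]; exact pow_le_one₀ (norm_nonneg _) hy
        _ = ‖x - y‖ := mul_one _

lemma pow_sub_one {x : K} (hx : ‖x‖ ≤ 1) (n : ℕ) : ‖x ^ n - 1‖ ≤ ‖x - 1‖ := by
  simpa using pow_sub_pow hx (le_of_eq norm_one) n

lemma geom_near {w v : K} {t : ℝ} (hw : ‖w‖ ≤ 1) (hv : ‖v‖ ≤ 1)
    (hw1 : ‖w - 1‖ ≤ t) (hv1 : ‖v - 1‖ ≤ t) (n : ℕ) :
    ‖(∑ i ∈ Finset.range n, w ^ i * v ^ (n - 1 - i)) - (n : K)‖ ≤ t := by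
  have ht0 : 0 ≤ t := le_trans (norm_nonneg _) hw1
  have hrw : (∑ i ∈ Finset.range n, w ^ i * v ^ (n - 1 - i)) - (n : K)
      = ∑ i ∈ Finset.range n, (w ^ i * v ^ (n - 1 - i) - 1) := by
    rw [Finset.sum_sub_distrib, Finset.sum_const, Finset.card_range, nsmul_eq_mul, mul_one]
  rw [hrw]
  refine IsUltrametricDist.norm_sum_le_of_forall_le_of_nonneg ht0 fun i _ => ?_
  have hid : w ^ i * v ^ (n - 1 - i) - 1
      = w ^ i * (v ^ (n - 1 - i) - 1) + (w ^ i - 1) := by ring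
  rw [hid]
  refine (IsUltrametricDist.norm_add_le_max _ _).trans (max_le ?_ ?_)
  · rw [norm_mul]
    calc ‖w ^ i‖ * ‖v ^ (n - 1 - i) - 1‖ ≤ 1 * t := by
          refine mul_le_mul ?_ ((pow_sub_one hv _).trans hv1) (norm_nonneg _) zero_le_one
          rw [norm_pow]; exact pow_le_one₀ (norm_nonneg _) hw
      _ = t := one_mul _
  · exact (pow_sub_one hw i).trans hw1

lemma qser_summable {a : ℕ → K} {C rhat : ℝ} (hC : ∀ i, ‖a i‖ * rhat ^ i ≤ C)
    (hrhat : 1 < rhat) {z : K} (hz : ‖z‖ < rhat) :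
    Summable fun i => a i * z ^ i := by
  have h0 : (0 : ℝ) < rhat := lt_trans one_pos hrhat
  refine Summable.of_norm_bounded (g := fun i => C * (‖z‖ / rhat) ^ i)
    ((summable_geometric_of_lt_one (by positivity) (by rwa [div_lt_one h0])).mul_left C)
    fun i => ?_
  show ‖a i * z ^ i‖ ≤ C * (‖z‖ / rhat) ^ i
  have h1 : ‖a i‖ * rhat ^ i * ‖z‖ ^ i ≤ C * ‖z‖ ^ i :=
    mul_le_mul_of_nonneg_right (hC i) (by positivity)
  rw [norm_mul, norm_pow, div_pow, ← mul_div_assoc, le_div_iff₀ (by positivity)]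
  nlinarith [h1]

lemma qser_le {a : ℕ → K} {C rhat : ℝ} (hC : ∀ i, ‖a i‖ * rhat ^ i ≤ C)
    (hrhat : 1 < rhat) {z : K} (hz : ‖z‖ ≤ rhat) : ‖Qser a z‖ ≤ C := by
  have hC0 : (0 : ℝ) ≤ C := le_trans (norm_nonneg (a 0)) (by simpa using hC 0)
  refine IsUltrametricDist.norm_tsum_le_of_forall_le_of_nonneg hC0 fun i => ?_
  rw [norm_mul, norm_pow]
  calc ‖a i‖ * ‖z‖ ^ i ≤ ‖a i‖ * rhat ^ i := by
        refine mul_le_mul_of_nonneg_left (pow_le_pow_left₀ (norm_nonneg _) hz i) (norm_nonneg _)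
    _ ≤ C := hC i

lemma qser_lip {a : ℕ → K} {C rhat : ℝ} (hC : ∀ i, ‖a i‖ * rhat ^ i ≤ C)
    (hrhat : 1 < rhat) {z w : K} (hz : ‖z‖ ≤ 1) (hw : ‖w‖ ≤ 1) :
    ‖Qser a z - Qser a w‖ ≤ C * ‖z - w‖ := by
  have hC0 : (0 : ℝ) ≤ C := le_trans (norm_nonneg (a 0)) (by simpa using hC 0)
  have s1 := qser_summable hC hrhat (lt_of_le_of_lt hz hrhat)
  have s2 := qser_summable hC hrhat (lt_of_le_of_lt hw hrhat)
  have hai : ∀ i, ‖a i‖ ≤ C := fun i =>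
    le_trans (le_mul_of_one_le_right (norm_nonneg _)
      (one_le_pow₀ hrhat.le)) (hC i)
  rw [Qser, Qser, ← s1.tsum_sub s2]
  refine IsUltrametricDist.norm_tsum_le_of_forall_le_of_nonneg
    (mul_nonneg hC0 (norm_nonneg _)) fun i => ?_
  rw [← mul_sub, norm_mul]
  exact mul_le_mul (hai i) (pow_sub_pow hz hw i) (norm_nonneg _) hC0

end Statement11Aux

open Statement11Aux

set_option maxHeartbeats 1000000 in
/-- Basic mapping properties of `Q_λ`. Here `K` plays the role of `ℂ_p`. -/
theorem statement11 (p : ℕ) (hp : p.Prime)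
    {K : Type*} [NontriviallyNormedField K] [IsAlgClosed K] [CompleteSpace K]
    [IsUltrametricDist K] [CharZero K]
    (hpnorm : ‖(p : K)‖ = (p : ℝ)⁻¹)
    (rhat : ℝ) (hrhat : 1 < rhat) (hrhatval : ∃ x : K, x ≠ 0 ∧ ‖x‖ = rhat)
    (a : ℕ → K)
    (hQnorm : ∃ C : ℝ, C < (p : ℝ) ^ (-(1:ℝ) / ((p : ℝ) - 1)) ∧ ∀ i : ℕ, ‖a i‖ * rhat ^ i ≤ C)
    (h : K → K)
    (hfix : ∀ lam : K, ‖lam - 1‖ < 1 →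
      ‖h lam - 1‖ ≤ ‖Qser a 1‖ / p ∧ Qstar p a lam (h lam) = h lam)
    (lam : K) (hlam : ‖lam - 1‖ < 1) (z : K) :
    ((p : ℝ) ^ (-(1:ℝ) / ((p : ℝ) - 1)) < ‖z‖ → ‖z‖ < 1 →
      ‖Qconj p a h lam z‖ = (p : ℝ) * ‖z‖ ^ p ∧ ‖z‖ < ‖Qconj p a h lam z‖) ∧
    (‖z‖ ≤ (p : ℝ) ^ (-(1:ℝ) / ((p : ℝ) - 1)) →
      ‖Qconj p a h lam z‖ ≤ (p : ℝ) ^ (-(1:ℝ) / ((p : ℝ) - 1))) ∧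
    (‖z - 1‖ < 1 → ‖Qconj p a h lam z - 1‖ = (p : ℝ) * ‖z - 1‖) ∧
    (1 < ‖z‖ → ‖z‖ < rhat → ‖Qconj p a h lam z‖ = (p : ℝ) * ‖z‖ ^ (p + 1)) := by
  obtain ⟨C, hCρ, hC⟩ := hQnorm
  have hp1 : (1 : ℝ) < p := by exact_mod_cast hp.one_lt
  have hp0 : (0 : ℝ) < p := lt_trans one_pos hp1
  set ρ : ℝ := (p : ℝ) ^ (-(1:ℝ) / ((p : ℝ) - 1)) with hρdef
  have hρ0 : 0 < ρ := Real.rpow_pos_of_pos hp0 _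
  have hρ1 : ρ < 1 := Real.rpow_lt_one_of_one_lt_of_neg hp1
    (div_neg_of_neg_of_pos (by norm_num) (by linarith))
  have hC0 : (0 : ℝ) ≤ C := le_trans (norm_nonneg (a 0)) (by simpa using hC 0)
  have hk : p = (p - 1) + 1 := (Nat.succ_pred_eq_of_pos hp.pos).symm
  have hcast : ((p - 1 : ℕ) : ℝ) = (p : ℝ) - 1 := by
    push_cast [Nat.cast_sub hp.one_le]; ring
  have hρk : ρ ^ (p - 1) = (p : ℝ)⁻¹ := by
    rw [hρdef, ← Real.rpow_natCast ((p : ℝ) ^ (-(1:ℝ) / ((p : ℝ) - 1))) (p - 1),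
      ← Real.rpow_mul hp0.le, hcast, div_mul_cancel₀ _ (by linarith : (p : ℝ) - 1 ≠ 0),
      Real.rpow_neg_one]
  have hρpow : ∀ r : ℝ, r ^ p = r ^ (p - 1) * r := fun r => by
    conv_lhs => rw [hk]
    rw [pow_succ]
  have hρp : (p : ℝ) * ρ ^ p = ρ := by
    rw [hρpow, hρk]; field_simp
  -- norms of basic quantities
  have hlam1 : ‖lam‖ = 1 := by
    have : lam = 1 + (lam - 1) := by ring
    rw [this, add_norm_eq (by rwa [norm_one])]; exact norm_one
  have hpK : ‖(p : K)‖ = (p : ℝ)⁻¹ := hpnorm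
  have hc1 : ‖lam / (p : K)‖ = p := by
    rw [norm_div, hlam1, hpK, one_div, inv_inv]
  have hc2 : ‖1 - lam / (p : K)‖ = p := by
    have hid : (1 : K) - lam / (p : K) = -(lam / (p : K)) + 1 := by ring
    rw [hid, add_norm_eq (by rw [norm_neg, hc1, norm_one]; exact hp1), norm_neg, hc1]
  obtain ⟨hδ0, hfixed⟩ := hfix lam hlam
  have hQ1 : ‖Qser a (1 : K)‖ ≤ C := qser_le hC hrhat (by rw [norm_one]; linarith)
  have hδ : ‖h lam - 1‖ ≤ C / p := hδ0.trans (by gcongr)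
  have hδC : ‖h lam - 1‖ ≤ C := hδ.trans (div_le_self hC0 hp1.le)
  have hδρ : ‖h lam - 1‖ < ρ := lt_of_le_of_lt hδC hCρ
  have hδ1 : ‖h lam - 1‖ < 1 := lt_trans hδρ hρ1
  have hhle : ‖h lam‖ ≤ 1 := by
    have hid : h lam = 1 + (h lam - 1) := by ring
    rw [hid]
    exact (IsUltrametricDist.norm_add_le_max _ _).trans
      (max_le (le_of_eq norm_one) hδ1.le)
  set w : K := z + h lam - 1 with hwdef
  have hw' : w = z + (h lam - 1) := by rw [hwdef]; ring
  have hwh : w - h lam = z - 1 := by rw [hwdef]; ring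
  have hexpr : Qconj p a h lam z = Pfam p lam w + (Qser a w - (h lam - 1)) := by
    simp only [Qconj, Qstar, ← hwdef]; ring
  have hn1 : ‖lam / (p : K) * w ^ p‖ = (p : ℝ) * ‖w‖ ^ p := by
    rw [norm_mul, norm_pow, hc1]
  have hn2 : ‖(1 - lam / (p : K)) * w ^ (p + 1)‖ = (p : ℝ) * ‖w‖ ^ (p + 1) := by
    rw [norm_mul, norm_pow, hc2]
  refine ⟨?_, ?_, ?_, ?_⟩
  · -- (i) ρ < ‖z‖ < 1
    intro hz1 hz2
    have hz0 : 0 < ‖z‖ := lt_trans hρ0 hz1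
    have hwz : ‖w‖ = ‖z‖ := by rw [hw', add_norm_eq (lt_trans hδρ hz1)]
    have hPw : ‖Pfam p lam w‖ = (p : ℝ) * ‖z‖ ^ p := by
      rw [Pfam, add_norm_eq, hn1, hwz]
      rw [hn1, hn2, hwz]
      have : ‖z‖ ^ (p + 1) < ‖z‖ ^ p :=
        pow_lt_pow_right_of_lt_one₀ hz0 hz2 (Nat.lt_succ_self p)
      nlinarith
    have hrest : ‖Qser a w - (h lam - 1)‖ ≤ C := by
      refine (sub_norm_le _ _).trans (max_le ?_ hδC)
      exact qser_le hC hrhat (by rw [hwz]; linarith)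
    have hρzp : ρ < (p : ℝ) * ‖z‖ ^ p := by
      calc ρ = (p : ℝ) * ρ ^ p := hρp.symm
        _ < (p : ℝ) * ‖z‖ ^ p := by
            refine mul_lt_mul_of_pos_left (pow_lt_pow_left₀ hz1 hρ0.le hp.pos.ne') hp0
    have hmain : ‖Qconj p a h lam z‖ = (p : ℝ) * ‖z‖ ^ p := by
      rw [hexpr, add_norm_eq, hPw]
      rw [hPw]
      exact lt_of_le_of_lt hrest (lt_trans hCρ hρzp)
    refine ⟨hmain, ?_⟩
    rw [hmain]
    have h1 : ρ ^ (p - 1) < ‖z‖ ^ (p - 1) := pow_lt_pow_left₀ hz1 hρ0.le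
      (Nat.sub_ne_zero_of_lt hp.one_lt)
    have h2 : (p : ℝ) * ρ ^ (p - 1) = 1 := by rw [hρk]; field_simp
    have h3 : ‖z‖ ^ p = ‖z‖ ^ (p - 1) * ‖z‖ := hρpow _
    have h4 : (1 : ℝ) < (p : ℝ) * ‖z‖ ^ (p - 1) := by nlinarith
    calc ‖z‖ = 1 * ‖z‖ := (one_mul _).symm
      _ < ((p : ℝ) * ‖z‖ ^ (p - 1)) * ‖z‖ := mul_lt_mul_of_pos_right h4 hz0
      _ = (p : ℝ) * ‖z‖ ^ p := by rw [h3]; ring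
  · -- (ii) ‖z‖ ≤ ρ
    intro hz
    have hwρ : ‖w‖ ≤ ρ := by
      rw [hw']
      exact (IsUltrametricDist.norm_add_le_max _ _).trans (max_le hz hδρ.le)
    have hw1 : ‖w‖ ≤ 1 := hwρ.trans hρ1.le
    have hPw : ‖Pfam p lam w‖ ≤ ρ := by
      refine (IsUltrametricDist.norm_add_le_max _ _).trans (max_le ?_ ?_)
      · rw [hn1, ← hρp]
        exact mul_le_mul_of_nonneg_left (pow_le_pow_left₀ (norm_nonneg _) hwρ p) hp0.le
      · rw [hn2, ← hρp]
        refine mul_le_mul_of_nonneg_left ?_ hp0.le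
        calc ‖w‖ ^ (p + 1) ≤ ‖w‖ ^ p := pow_le_pow_of_le_one (norm_nonneg _) hw1
              (Nat.le_succ p)
          _ ≤ ρ ^ p := pow_le_pow_left₀ (norm_nonneg _) hwρ p
    rw [hexpr]
    refine (IsUltrametricDist.norm_add_le_max _ _).trans (max_le hPw ?_)
    refine (sub_norm_le _ _).trans
      (max_le (le_trans ?_ hCρ.le) (le_trans hδC hCρ.le))
    exact qser_le hC hrhat (by linarith [hw1])
  · -- (iii) ‖z - 1‖ < 1
    intro hz
    by_cases hz1 : z = 1
    · subst hz1
      have : Qconj p a h lam 1 = 1 := by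
        simp only [Qconj]
        have : (1 : K) + h lam - 1 = h lam := by ring
        rw [this, hfixed]; ring
      rw [this]; simp
    · have hz0 : 0 < ‖z - 1‖ := by
        simpa [sub_eq_zero] using norm_pos_iff.mpr (sub_ne_zero.mpr hz1)
      have hw1 : ‖w - 1‖ < 1 := by
        have hid : w - 1 = (z - 1) + (h lam - 1) := by rw [hwdef]; ring
        rw [hid]
        exact lt_of_le_of_lt (IsUltrametricDist.norm_add_le_max _ _)
          (max_lt hz hδ1)
      have hwle : ‖w‖ ≤ 1 := by
        have hid : w = 1 + (w - 1) := by ring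
        rw [hid]
        exact (IsUltrametricDist.norm_add_le_max _ _).trans
          (max_le (le_of_eq norm_one) hw1.le)
      set t : ℝ := max ‖w - 1‖ ‖h lam - 1‖ with htdef
      have ht1 : t < 1 := max_lt hw1 hδ1
      have ht0 : 0 ≤ t := le_trans (norm_nonneg _) (le_max_left _ _)
      set G : ℕ → K := fun n => ∑ i ∈ Finset.range n, w ^ i * (h lam) ^ (n - 1 - i)
        with hGdef
      have hG : ∀ n : ℕ, ‖G n - (n : K)‖ ≤ t := fun n =>
        geom_near hwle hhle (le_max_left _ _) (le_max_right _ _) n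
      -- norm of G p is < 1, norm of G (p+1) is 1
      have hnormn : ‖(p : K)‖ < 1 := by rw [hpK]; exact inv_lt_one_of_one_lt₀ hp1
      have hGp : ‖G p‖ < 1 := by
        have hid : G p = (p : K) + (G p - (p : K)) := by ring
        rw [hid]
        exact lt_of_le_of_lt (IsUltrametricDist.norm_add_le_max _ _)
          (max_lt hnormn (lt_of_le_of_lt (hG p) ht1))
      have hGp1 : ‖G (p + 1)‖ = 1 := by
        have hid : G (p + 1) = 1 + ((p : K) + (G (p + 1) - ((p : ℕ) + 1 : ℕ))) := by
          push_cast; ring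
        rw [hid, add_norm_eq, norm_one]
        rw [norm_one]
        exact lt_of_le_of_lt (IsUltrametricDist.norm_add_le_max _ _)
          (max_lt hnormn (lt_of_le_of_lt (hG (p + 1)) ht1))
      set S : K := lam / (p : K) * G p + (1 - lam / (p : K)) * G (p + 1) with hSdef
      have hS : ‖S‖ = p := by
        rw [hSdef, add_norm_eq']
        · rw [norm_mul, hc2, hGp1, mul_one]
        · rw [norm_mul, norm_mul, hc1, hc2, hGp1, mul_one]
          calc (p : ℝ) * ‖G p‖ < (p : ℝ) * 1 := mul_lt_mul_of_pos_left hGp hp0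
            _ = p := mul_one _
      have hfac : Pfam p lam w - Pfam p lam (h lam) = S * (w - h lam) := by
        simp only [Pfam, hSdef, hGdef]
        rw [add_mul, mul_assoc, mul_assoc, geom_sum₂_mul w (h lam) p,
          geom_sum₂_mul w (h lam) (p + 1)]
        ring
      have hexpr3 : Qconj p a h lam z - 1
          = (Pfam p lam w - Pfam p lam (h lam)) + (Qser a w - Qser a (h lam)) := by
        have hf := hfixed
        simp only [Qstar] at hf
        simp only [Qconj, Qstar, ← hwdef]
        linear_combination hf
      rw [hexpr3, add_norm_eq]
      · rw [hfac, norm_mul, hS, hwh]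
      · rw [hfac, norm_mul, hS, hwh]
        calc ‖Qser a w - Qser a (h lam)‖ ≤ C * ‖w - h lam‖ :=
              qser_lip hC hrhat hwle hhle
          _ = C * ‖z - 1‖ := by rw [hwh]
          _ < (p : ℝ) * ‖z - 1‖ := by
              refine mul_lt_mul_of_pos_right ?_ hz0
              linarith
  · -- (iv) 1 < ‖z‖ < rhat
    intro hz1 hz2
    have hwz : ‖w‖ = ‖z‖ := by
      rw [hw', add_norm_eq (lt_trans hδ1 hz1)]
    have hPw : ‖Pfam p lam w‖ = (p : ℝ) * ‖z‖ ^ (p + 1) := by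
      rw [Pfam, add_norm_eq', hn2, hwz]
      rw [hn1, hn2, hwz]
      have : ‖z‖ ^ p < ‖z‖ ^ (p + 1) := pow_lt_pow_right₀ hz1 (Nat.lt_succ_self p)
      nlinarith
    have hbig : (1 : ℝ) < (p : ℝ) * ‖z‖ ^ (p + 1) := by
      have : (1 : ℝ) < ‖z‖ ^ (p + 1) := one_lt_pow₀ hz1 (Nat.succ_ne_zero p)
      nlinarith
    rw [hexpr, add_norm_eq, hPw]
    rw [hPw]
    calc ‖Qser a w - (h lam - 1)‖ ≤ C := by
          refine (sub_norm_le _ _).trans (max_le ?_ hδC)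
          exact qser_le hC hrhat (by rw [hwz]; exact hz2.le)
      _ < 1 := lt_trans hCρ hρ1
      _ < (p : ℝ) * ‖z‖ ^ (p + 1) := hbig
end

section
/- For each λ ∈ Λ, the filled Julia set K(Q_λ, B) = {z ∈ B : Q_λ^n(z) ∈ B for all n ≥ 0} is contained in the disjoint union B_0 ⊔ B_1, where B_0 = {z : |z| < 1} and B_1 = {z : |z − 1| < 1}. -/
open Filter Metric

/-- In an ultrametric field, adding an element of strictly smaller norm does not change
the norm. -/
private lemma add_norm_eq_left {K : Type*} [NontriviallyNormedField K] [IsUltrametricDist K]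
    {x y : K} (h : ‖y‖ < ‖x‖) : ‖x + y‖ = ‖x‖ := by
  rw [IsUltrametricDist.norm_add_eq_max_of_norm_ne_norm h.ne', max_eq_left h.le]

/-- The filled Julia set `K(Q_λ, B) = {z ∈ B : Q_λ^n(z) ∈ B for all n}` is contained in
the disjoint union `B_0 ⊔ B_1`, where `B_0 = {|z| < 1}` and `B_1 = {|z − 1| < 1}`.
Here `K` plays the role of `ℂ_p`. -/
theorem statement13 (p : ℕ) (hp : p.Prime)
    {K : Type*} [NontriviallyNormedField K] [IsAlgClosed K] [CompleteSpace K]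
    [IsUltrametricDist K] [CharZero K]
    (hpnorm : ‖(p : K)‖ = (p : ℝ)⁻¹)
    (rhat : ℝ) (hrhat : 1 < rhat) (hrhatval : ∃ x : K, x ≠ 0 ∧ ‖x‖ = rhat)
    (a : ℕ → K)
    (hQnorm : ∃ C : ℝ, C < (p : ℝ) ^ (-(1:ℝ) / ((p : ℝ) - 1)) ∧ ∀ i : ℕ, ‖a i‖ * rhat ^ i ≤ C)
    (h : K → K)
    (hfix : ∀ lam : K, ‖lam - 1‖ < 1 →
      ‖h lam - 1‖ ≤ ‖Qser a 1‖ / p ∧ Qstar p a lam (h lam) = h lam)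
    (lam : K) (hlam : ‖lam - 1‖ < 1) :
    {z : K | z ∈ closedBall (0 : K) rhat ∧
        ∀ n : ℕ, (Qconj p a h lam)^[n] z ∈ closedBall (0 : K) rhat}
      ⊆ ball (0 : K) 1 ∪ ball (1 : K) 1 := by
  obtain ⟨C, hCρ, hC⟩ := hQnorm
  have hp1R : (1:ℝ) < p := by exact_mod_cast hp.one_lt
  have hppos : (0:ℝ) < p := by linarith
  have hC0 : (0:ℝ) ≤ C := le_trans (norm_nonneg (a 0)) (by simpa using hC 0)
  have hρlt1 : ((p:ℝ)) ^ (-(1:ℝ)/((p:ℝ)-1)) < 1 :=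
    Real.rpow_lt_one_of_one_lt_of_neg hp1R
      (div_neg_of_neg_of_pos (by norm_num) (by linarith))
  have hC1 : C < 1 := hCρ.trans hρlt1
  -- bound on the power series on the ball of radius rhat
  have hQb : ∀ w : K, ‖w‖ ≤ rhat → ‖Qser a w‖ ≤ C := by
    intro w hw
    refine IsUltrametricDist.norm_tsum_le_of_forall_le_of_nonneg hC0 ?_
    intro i
    rw [norm_mul, norm_pow]
    calc ‖a i‖ * ‖w‖ ^ i ≤ ‖a i‖ * rhat ^ i := by gcongr
      _ ≤ C := hC i
  -- bound on h lam - 1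
  have hh : ‖h lam - 1‖ < 1 := by
    have h1 : ‖Qser a 1‖ ≤ C := hQb 1 (by simpa using hrhat.le)
    calc ‖h lam - 1‖ ≤ ‖Qser a 1‖ / p := (hfix lam hlam).1
      _ ≤ C / p := by gcongr
      _ < 1 := by rw [div_lt_one hppos]; linarith
  -- basic norms
  have hlam1 : ‖lam‖ = 1 := by
    have e : lam = 1 + (lam - 1) := by ring
    rw [e, add_norm_eq_left (by simpa using hlam), norm_one]
  have hpK : ‖(p:K)‖ = (p:ℝ)⁻¹ := hpnorm
  have hpKlt1 : ‖(p:K)‖ < 1 := by rw [hpK]; exact inv_lt_one_of_one_lt₀ hp1R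
  have hpm1 : ‖(p:K) - 1‖ = 1 := by
    have e : (p:K) - 1 = (-1) + (p:K) := by ring
    rw [e, add_norm_eq_left (by rwa [norm_neg, norm_one]), norm_neg, norm_one]
  have hpmlam : ‖(p:K) - lam‖ = 1 := by
    have e : (p:K) - lam = ((p:K) - 1) + (-(lam - 1)) := by ring
    rw [e, add_norm_eq_left (by rwa [norm_neg, hpm1]), hpm1]
  have hdivp : ‖lam / (p:K)‖ = p := by
    rw [norm_div, hlam1, hpK, one_div, inv_inv]
  have hpne : ((p:K)) ≠ 0 := Nat.cast_ne_zero.mpr hp.ne_zero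
  have hone : ‖1 - lam / (p:K)‖ = p := by
    have e : (1 : K) - lam / (p:K) = ((p:K) - lam) / (p:K) := by field_simp
    rw [e, norm_div, hpmlam, hpK, one_div, inv_inv]
  -- key estimate: one step of the dynamics multiplies the norm by at least p
  have key : ∀ w : K, ‖w‖ ≤ rhat → 1 ≤ ‖w‖ → 1 ≤ ‖w - 1‖ →
      (p:ℝ) * ‖w‖ ≤ ‖Qconj p a h lam w‖ := by
    intro w hwB hw1 hwm1
    set v := w + h lam - 1 with hvdef
    have hv : v = w + (h lam - 1) := by rw [hvdef]; ring
    have hvnorm : ‖v‖ = ‖w‖ := by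
      rw [hv, add_norm_eq_left (lt_of_lt_of_le hh hw1)]
    have hvB : ‖v‖ ≤ rhat := by rw [hvnorm]; exact hwB
    have hQv : ‖Qser a v‖ ≤ C := hQb _ hvB
    have hQconj : Qconj p a h lam w = Qstar p a lam v + (1 - h lam) := by
      show Qstar p a lam (w + h lam - 1) - h lam + 1 = _
      rw [← hvdef]; ring
    have hmh : ‖(1:K) - h lam‖ < 1 := by rwa [norm_sub_rev]
    rcases lt_or_ge 1 ‖w‖ with hwgt | hwle
    · -- case ‖w‖ > 1
      have hvgt : 1 < ‖v‖ := by rwa [hvnorm]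
      have ht1 : ‖lam / (p:K) * v ^ p‖ = p * ‖v‖ ^ p := by
        rw [norm_mul, norm_pow, hdivp]
      have ht2 : ‖(1 - lam / (p:K)) * v ^ (p+1)‖ = p * ‖v‖ ^ (p+1) := by
        rw [norm_mul, norm_pow, hone]
      have hlt : (p:ℝ) * ‖v‖ ^ p < p * ‖v‖ ^ (p+1) :=
        (mul_lt_mul_iff_right₀ hppos).2 (pow_lt_pow_right₀ hvgt (Nat.lt_succ_self p))
      have hPf : ‖Pfam p lam v‖ = p * ‖v‖ ^ (p+1) := by
        have e : Pfam p lam v = (1 - lam / (p:K)) * v ^ (p+1) + lam / (p:K) * v ^ p := by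
          simp only [Pfam]; ring
        rw [e, add_norm_eq_left (by rw [ht1, ht2]; exact hlt), ht2]
      have hone_le : (1:ℝ) ≤ ‖v‖ ^ (p+1) := one_le_pow₀ hvgt.le
      have hbig : (1:ℝ) < p * ‖v‖ ^ (p+1) := by nlinarith
      have hQs : ‖Qstar p a lam v‖ = p * ‖v‖ ^ (p+1) := by
        have e : Qstar p a lam v = Pfam p lam v + Qser a v := rfl
        rw [e, add_norm_eq_left (by rw [hPf]; linarith), hPf]
      have hfin : ‖Qconj p a h lam w‖ = p * ‖v‖ ^ (p+1) := by
        rw [hQconj, add_norm_eq_left (by rw [hQs]; linarith), hQs]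
      rw [hfin, hvnorm]
      have hle : ‖w‖ ≤ ‖w‖ ^ (p+1) := le_self_pow₀ (by linarith) (by omega)
      exact (mul_le_mul_iff_right₀ hppos).2 hle
    · -- case ‖w‖ = 1
      have hw : ‖w‖ = 1 := le_antisymm hwle hw1
      have hvone : ‖v‖ = 1 := by rwa [hvnorm]
      have hwm1' : ‖w - 1‖ = 1 := by
        refine le_antisymm ?_ hwm1
        calc ‖w - 1‖ = ‖w + (-1)‖ := by ring_nf
          _ ≤ max ‖w‖ ‖(-1:K)‖ := IsUltrametricDist.norm_add_le_max _ _
          _ ≤ 1 := by rw [hw, norm_neg, norm_one]; simp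
      have hvm1 : ‖v - 1‖ = 1 := by
        have e : v - 1 = (w - 1) + (h lam - 1) := by rw [hvdef]; ring
        rw [e, add_norm_eq_left (by rw [hwm1']; exact hh), hwm1']
      have hfact : Pfam p lam v = v ^ p / (p:K) * (lam * (1 - v) + (p:K) * v) := by
        simp only [Pfam]; field_simp; ring
      have hinner : ‖lam * (1 - v) + (p:K) * v‖ = 1 := by
        have h1v : ‖lam * (1 - v)‖ = 1 := by
          rw [norm_mul, hlam1, one_mul, norm_sub_rev, hvm1]
        rw [add_norm_eq_left, h1v]
        rw [h1v, norm_mul, hvone, mul_one]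
        exact hpKlt1
      have hPf : ‖Pfam p lam v‖ = p := by
        rw [hfact, norm_mul, hinner, mul_one, norm_div, norm_pow, hvone, one_pow,
          hpK, one_div, inv_inv]
      have hQs : ‖Qstar p a lam v‖ = p := by
        have e : Qstar p a lam v = Pfam p lam v + Qser a v := rfl
        rw [e, add_norm_eq_left (by rw [hPf]; linarith), hPf]
      have hfin : ‖Qconj p a h lam w‖ = p := by
        rw [hQconj, add_norm_eq_left (by rw [hQs]; linarith), hQs]
      rw [hfin, hw, mul_one]
  -- main argument by contradiction
  intro z hz
  obtain ⟨hzB, hiter⟩ := hz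
  by_contra hcon
  simp only [Set.mem_union, mem_ball, dist_eq_norm, not_or, not_lt, sub_zero] at hcon
  obtain ⟨hz0, hz1⟩ := hcon
  have main : ∀ n : ℕ, (p:ℝ) ^ n ≤ ‖(Qconj p a h lam)^[n] z‖ ∧
      1 ≤ ‖(Qconj p a h lam)^[n] z - 1‖ := by
    intro n
    induction n with
    | zero => simpa using ⟨hz0, hz1⟩
    | succ n ih =>
      obtain ⟨ih1, ih2⟩ := ih
      set w := (Qconj p a h lam)^[n] z with hwdef
      have hwB : ‖w‖ ≤ rhat := by simpa [mem_closedBall, dist_eq_norm] using hiter n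
      have hw1 : 1 ≤ ‖w‖ := le_trans (one_le_pow₀ hp1R.le) ih1
      have hstep := key w hwB hw1 ih2
      have hiter' : (Qconj p a h lam)^[n+1] z = Qconj p a h lam w := by
        rw [Function.iterate_succ_apply']
      have hgt : (1:ℝ) < ‖Qconj p a h lam w‖ := by
        have : (p:ℝ) * 1 ≤ (p:ℝ) * ‖w‖ := by nlinarith
        calc (1:ℝ) < p := hp1R
          _ = p * 1 := by ring
          _ ≤ p * ‖w‖ := this
          _ ≤ _ := hstep
      constructor
      · rw [hiter', pow_succ, mul_comm]
        calc (p:ℝ) * (p:ℝ)^n ≤ (p:ℝ) * ‖w‖ := by nlinarith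
          _ ≤ _ := hstep
      · rw [hiter']
        have e : Qconj p a h lam w - 1 = Qconj p a h lam w + (-1) := by ring
        rw [e, add_norm_eq_left (by rwa [norm_neg, norm_one])]
        linarith
  obtain ⟨n, hn⟩ := pow_unbounded_of_one_lt rhat hp1R
  have h1 := (main n).1
  have h2 : ‖(Qconj p a h lam)^[n] z‖ ≤ rhat := by
    simpa [mem_closedBall, dist_eq_norm] using hiter n
  linarith
end
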